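/- arXiv:2503.09246 — 13 statements merged into one kernel-verified Lean document; each statement's English description precedes it below -/
import Mathlib

section
/- Let u be a nonprincipal ultrafilter on ℕ. Then the tensor product u ⊗ u is a Ramsey witness: for every A ∈ u ⊗ u there exists an infinite set H ⊆ ℕ such that (h₁, h₂) ∈ A for all h₁, h₂ ∈ H with h₁ < h₂. -/
/-- The tensor product of ultrafilters: `A ∈ u ⊗ v ↔ {a | {b | (a,b) ∈ A} ∈ v} ∈ u`. -/
def Ultrafilter.tensor {α β : Type*} (u : Ultrafilter α) (v : Ultrafilter β) :
    Ultrafilter (α × β) :=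
  u.bind fun a => v.map fun b => (a, b)

/-- An ultrafilter on `ℕ × ℕ` is a Ramsey witness if every member contains `[H]²`
for some infinite `H ⊆ ℕ`. -/
def IsRamseyWitness (w : Ultrafilter (ℕ × ℕ)) : Prop :=
  ∀ A ∈ w, ∃ H : Set ℕ, H.Infinite ∧ ∀ h₁ ∈ H, ∀ h₂ ∈ H, h₁ < h₂ → (h₁, h₂) ∈ A

/-!
If `A ∈ u ⊗ u`, then for `u`-almost every `a`, `u`-almost every `b` satisfies `(a, b) ∈ A`.
Build `x₀, x₁, …` one at a time: each new point must be one of the good `a`'s, lie above all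
earlier points and be related to all of them. These are finitely many `u`-large conditions, so
they can be met since `u` is proper; nonprincipality is what makes "above `xₖ`" `u`-large.
-/

theorem Ultrafilter.mem_tensor_iff {α β : Type*} {u : Ultrafilter α} {v : Ultrafilter β}
    {A : Set (α × β)} : A ∈ u.tensor v ↔ ∀ᶠ a in u, ∀ᶠ b in v, (a, b) ∈ A :=
  Iff.rfl

theorem Filter.exists_seq_forall_lt_of_eventually_eventually {α : Type*} {f : Filter α}
    [f.NeBot] {r : α → α → Prop} (h : ∀ᶠ a in f, ∀ᶠ b in f, r a b) :
    ∃ x : ℕ → α, ∀ m n, m < n → r (x m) (x n) := by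
  obtain ⟨x, -, hx⟩ := exists_seq_of_forall_finset_exists (fun a => ∀ᶠ b in f, r a b) r
    fun s hs => (h.and ((Filter.eventually_all_finset s).mpr hs)).exists
  exact ⟨x, hx⟩

theorem Ultrafilter.eventually_gt_of_forall_finite_notMem {u : Ultrafilter ℕ}
    (hu : ∀ A : Set ℕ, A.Finite → A ∉ u) (a : ℕ) : ∀ᶠ b in u, a < b := by
  have : (Set.Iic a)ᶜ ∈ u := u.compl_mem_iff_notMem.mpr (hu _ (Set.finite_Iic a))
  rwa [Set.compl_Iic] at this

theorem stmt_0 (u : Ultrafilter ℕ) (hu : ∀ A : Set ℕ, A.Finite → A ∉ u) :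
    IsRamseyWitness (u.tensor u) := by
  intro A hA
  have hgood : ∀ᶠ a in u, ∀ᶠ b in u, a < b ∧ (a, b) ∈ A :=
    (Ultrafilter.mem_tensor_iff.mp hA).mono fun a ha =>
      (u.eventually_gt_of_forall_finite_notMem hu a).and ha
  obtain ⟨x, hx⟩ := Filter.exists_seq_forall_lt_of_eventually_eventually hgood
  have hmono : StrictMono x := fun m n hmn => (hx m n hmn).1
  refine ⟨Set.range x, Set.infinite_range_of_injective hmono.injective, ?_⟩
  rintro _ ⟨m, rfl⟩ _ ⟨n, rfl⟩ hlt
  exact (hx m n (hmono.lt_iff_lt.mp hlt)).2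
end

section
/- In the space of ultrafilters on ℕ × ℕ equipped with the Stone–Čech topology (the topology with basic open sets {w | A ∈ w} for A ⊆ ℕ × ℕ), the topological closure of the set TS = {u ⊗ u | u a nonprincipal ultrafilter on ℕ} is exactly the set of all Ramsey witnesses. -/
lemma mem_tensor {α β : Type*} {u : Ultrafilter α} {v : Ultrafilter β} {A : Set (α × β)} :
    A ∈ u.tensor v ↔ {a | {b | (a, b) ∈ A} ∈ v} ∈ u := by
  constructor
  · intro h
    exact Filter.mem_bind'.mp h
  · intro h
    exact Filter.mem_bind'.mpr h

open Classical in
/-- Pick an element of a set of naturals. -/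
noncomputable def pickElt (S : Set ℕ) : ℕ := if h : S.Nonempty then h.choose else 0

lemma pickElt_mem {S : Set ℕ} (h : S.Nonempty) : pickElt S ∈ S := by
  rw [pickElt, dif_pos h]; exact h.choose_spec

/-- The decreasing chain of sets used to build a Ramsey set from a tensor square. -/
noncomputable def ramseyChain (A : Set (ℕ × ℕ)) (B : Set ℕ) : ℕ → Set ℕ
  | 0 => B
  | n + 1 =>
      ramseyChain A B n ∩ {b | (pickElt (ramseyChain A B n), b) ∈ A} ∩
        Set.Ioi (pickElt (ramseyChain A B n))

lemma ramseyChain_subset (A : Set (ℕ × ℕ)) (B : Set ℕ) {n m : ℕ} (h : n ≤ m) :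
    ramseyChain A B m ⊆ ramseyChain A B n := by
  induction m with
  | zero => simp_all
  | succ k ih =>
    rcases Nat.lt_or_ge n (k + 1) with h' | h'
    · exact fun x hx => ih (Nat.lt_succ_iff.mp h') (hx.1.1)
    · have : n = k + 1 := le_antisymm h h'
      subst this; exact fun x hx => hx

lemma key1 (u : Ultrafilter ℕ) (hu : ∀ A : Set ℕ, A.Finite → A ∉ u) (A : Set (ℕ × ℕ))
    (hA : A ∈ u.tensor u) :
    ∃ H : Set ℕ, H.Infinite ∧ ∀ h₁ ∈ H, ∀ h₂ ∈ H, h₁ < h₂ → (h₁, h₂) ∈ A := by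
  set B := {a | {b | (a, b) ∈ A} ∈ u} with hB
  have hBu : B ∈ u := mem_tensor.mp hA
  set C := ramseyChain A B with hC
  have hCB : ∀ n, C n ⊆ B := fun n => ramseyChain_subset A B (Nat.zero_le n)
  have hCmem : ∀ n, C n ∈ u := by
    intro n
    induction n with
    | zero => exact hBu
    | succ k ih =>
      have hne : (C k).Nonempty := Ultrafilter.nonempty_of_mem ih
      have hpick : pickElt (C k) ∈ B := hCB k (pickElt_mem hne)
      have h1 : {b | (pickElt (C k), b) ∈ A} ∈ u := hpick
      have h2 : Set.Ioi (pickElt (C k)) ∈ u := by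
        have : Set.Iic (pickElt (C k)) ∉ u := hu _ (Set.finite_Iic _)
        have := (Ultrafilter.compl_mem_iff_notMem).mpr this
        rwa [Set.compl_Iic] at this
      exact Filter.inter_mem (Filter.inter_mem ih h1) h2
  set g : ℕ → ℕ := fun n => pickElt (C n) with hg
  have hgmem : ∀ n, g n ∈ C n := fun n => pickElt_mem (Ultrafilter.nonempty_of_mem (hCmem n))
  have hmono : StrictMono g := by
    apply strictMono_nat_of_lt_succ
    intro n
    have := hgmem (n + 1)
    exact this.2
  refine ⟨Set.range g, Set.infinite_range_of_injective hmono.injective, ?_⟩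
  rintro h₁ ⟨i, rfl⟩ h₂ ⟨j, rfl⟩ hlt
  have hij : i < j := hmono.lt_iff_lt.mp hlt
  have : g j ∈ C (i + 1) := ramseyChain_subset A B hij (hgmem j)
  exact this.1.2

lemma key2 (A : Set (ℕ × ℕ)) (H : Set ℕ) (hH : H.Infinite)
    (hAH : ∀ h₁ ∈ H, ∀ h₂ ∈ H, h₁ < h₂ → (h₁, h₂) ∈ A) :
    ∃ u : Ultrafilter ℕ, (∀ B : Set ℕ, B.Finite → B ∉ u) ∧ A ∈ u.tensor u := by
  have hne : (Filter.cofinite ⊓ Filter.principal H).NeBot := by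
    rw [Filter.inf_principal_neBot_iff]
    intro U hU
    rw [Filter.mem_cofinite] at hU
    obtain ⟨x, hx⟩ := (hH.diff hU).nonempty
    exact ⟨x, not_not.mp hx.2, hx.1⟩
  set u := Ultrafilter.of (Filter.cofinite ⊓ Filter.principal H) with hu
  have hle : (u : Filter ℕ) ≤ Filter.cofinite ⊓ Filter.principal H := Ultrafilter.of_le _
  have hnonpr : ∀ B : Set ℕ, B.Finite → B ∉ u := by
    intro B hB hBu
    have : Bᶜ ∈ u := hle (Filter.mem_inf_of_left (by simpa using hB))
    exact (Ultrafilter.compl_mem_iff_notMem.mp this) hBu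
  have hHu : H ∈ u := hle (Filter.mem_inf_of_right (Filter.mem_principal_self H))
  refine ⟨u, hnonpr, ?_⟩
  rw [mem_tensor]
  apply Filter.mem_of_superset hHu
  intro a ha
  have : H ∩ Set.Ioi a ∈ u := by
    refine Filter.inter_mem hHu ?_
    have : Set.Iic a ∉ u := hnonpr _ (Set.finite_Iic _)
    have := (Ultrafilter.compl_mem_iff_notMem).mpr this
    rwa [Set.compl_Iic] at this
  exact Filter.mem_of_superset this fun b hb => hAH a ha b hb.1 hb.2

/-- The closure of the set of tensor squares of nonprincipal ultrafilters, in the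
Stone–Čech topology on `Ultrafilter (ℕ × ℕ)`, is exactly the set of Ramsey witnesses. -/
theorem stmt_1 :
    closure {w : Ultrafilter (ℕ × ℕ) |
        ∃ u : Ultrafilter ℕ, (∀ A : Set ℕ, A.Finite → A ∉ u) ∧ w = u.tensor u} =
      {w : Ultrafilter (ℕ × ℕ) | IsRamseyWitness w} := by
  ext w
  rw [ultrafilterBasis_is_basis.mem_closure_iff]
  constructor
  · intro h A hA
    obtain ⟨v, hAv, u, hu, rfl⟩ := h {w' | A ∈ w'} ⟨A, rfl⟩ hA
    exact key1 u hu A hAv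
  · intro hw o ho hwo
    obtain ⟨A, rfl⟩ := ho
    obtain ⟨H, hH, hAH⟩ := hw A hwo
    obtain ⟨u, hu, hAu⟩ := key2 A H hH hAH
    exact ⟨u.tensor u, hAu, u, hu, rfl⟩
end

section
/- Let f, g : ℕ → ℕ and suppose g is bounded-to-one, i.e. there exists k ∈ ℕ such that for every m ∈ ℕ the fiber g⁻¹({m}) has at most k elements. If u is an ultrafilter on ℕ such that the image ultrafilters satisfy f(u) = g(u), then {n ∈ ℕ | f(n) = g(n)} ∈ u. -/
/-!
Join `g n` and `f n` by an edge whenever they differ. Orienting each edge from `g n` to `f n`,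
every vertex `m` has out-degree at most `k`, since its out-neighbours lie in `f '' g⁻¹{m}`. Hence
every finite set of vertices contains one of in-degree at most `k`, and removing such vertices one
by one colours every finite subgraph with `2k + 1` colours; by compactness the whole graph is
`(2k + 1)`-colourable. For a colouring `c`, the image ultrafilters of `u` under `c ∘ f` and `c ∘ g`
agree and live on a finite set, so both are the same principal ultrafilter: `c (f n) = c (g n)` for
`u`-almost all `n`, and properness of `c` forces `f n = g n` there.
-/

open Finset

lemma Finset.exists_card_filter_mem_le {V : Type*} [DecidableEq V] {k : ℕ} (out : V → Finset V)
    (hout : ∀ v, #(out v) ≤ k) {S : Finset V} (hS : S.Nonempty) :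
    ∃ v ∈ S, #{w ∈ S | v ∈ out w} ≤ k := by
  refine exists_le_of_sum_le hS ?_
  calc ∑ v ∈ S, #{w ∈ S | v ∈ out w} = ∑ w ∈ S, #{v ∈ S | v ∈ out w} := by
        simp only [card_filter]; exact sum_comm
    _ ≤ ∑ _ ∈ S, k := sum_le_sum fun w _ ↦
        (card_le_card fun _ hv ↦ (mem_filter.1 hv).2).trans (hout w)

namespace SimpleGraph

variable {V : Type*} {G : SimpleGraph V}

lemma exists_coloring_on_finset [DecidableEq V] {k : ℕ} (out : V → Finset V)
    (hout : ∀ v, #(out v) ≤ k) (hadj : ∀ v w, G.Adj v w → w ∈ out v ∨ v ∈ out w)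
    (S : Finset V) : ∃ c : V → Fin (2 * k + 1), ∀ v ∈ S, ∀ w ∈ S, G.Adj v w → c v ≠ c w := by
  induction S using Finset.strongInduction with | _ S ih =>
  rcases S.eq_empty_or_nonempty with rfl | hS
  · exact ⟨fun _ ↦ 0, by simp⟩
  obtain ⟨v, hvS, hv⟩ := exists_card_filter_mem_le out hout hS
  obtain ⟨c, hc⟩ := ih (S.erase v) (erase_ssubset hvS)
  set used := ({w ∈ S | v ∈ out w} ∪ out v).image c
  have hused : ∀ w ∈ S, G.Adj v w → c w ∈ used := fun w hw hvw ↦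
    mem_image_of_mem c <| (hadj v w hvw).elim (mem_union_right _) fun h ↦
      mem_union_left _ (mem_filter.2 ⟨hw, h⟩)
  obtain ⟨j, -, hj⟩ : ∃ j ∈ univ, j ∉ used := by
    refine exists_mem_notMem_of_card_lt_card ?_
    calc #used ≤ #({w ∈ S | v ∈ out w} ∪ out v) := card_image_le
      _ ≤ k + k := (card_union_le _ _).trans (add_le_add hv (hout v))
      _ < #(univ : Finset (Fin (2 * k + 1))) := by simp; omega
  refine ⟨Function.update c v j, fun a ha b hb hab ↦ ?_⟩
  rcases eq_or_ne a v with rfl | hav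
  · rw [Function.update_self, Function.update_of_ne hab.ne.symm]
    exact fun h ↦ hj (h ▸ hused b hb hab)
  rcases eq_or_ne b v with rfl | hbv
  · rw [Function.update_self, Function.update_of_ne hav]
    exact fun h ↦ hj (h.symm ▸ hused a ha hab.symm)
  rw [Function.update_of_ne hav, Function.update_of_ne hbv]
  exact hc a (mem_erase.2 ⟨hav, ha⟩) b (mem_erase.2 ⟨hbv, hb⟩) hab

lemma nonempty_coloring_of_forall_finset {α : Type*} [Finite α]
    (h : ∀ S : Finset V, ∃ c : V → α, ∀ v ∈ S, ∀ w ∈ S, G.Adj v w → c v ≠ c w) :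
    Nonempty (G.Coloring α) := by
  refine nonempty_hom_of_forall_finite_subgraph_hom fun G' hG' ↦ Classical.choice ?_
  obtain ⟨c, hc⟩ := h hG'.toFinset
  exact ⟨⟨fun v ↦ c v, fun {v w} hvw ↦ hc v (by simp) w (by simp) (G'.adj_sub hvw)⟩⟩

theorem colorable_of_forall_adj_mem_or_mem {k : ℕ} (out : V → Finset V)
    (hout : ∀ v, #(out v) ≤ k)
    (hadj : ∀ v w, G.Adj v w → w ∈ out v ∨ v ∈ out w) : G.Colorable (2 * k + 1) := by
  classical
  exact nonempty_coloring_of_forall_finset (exists_coloring_on_finset out hout hadj)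

end SimpleGraph

lemma Ultrafilter.eventually_comp_eq_of_map_eq {α β γ : Type*} [Finite γ] {u : Ultrafilter α}
    {f g : α → β} (h : u.map f = u.map g) (c : β → γ) : ∀ᶠ x in u, c (f x) = c (g x) := by
  obtain ⟨j, hj⟩ := (u.map (c ∘ f)).eq_pure_of_finite
  have hj' : c ⁻¹' {j} ∈ u.map f := by
    rw [← Ultrafilter.mem_map, Ultrafilter.map_map, hj]; rfl
  filter_upwards [Ultrafilter.mem_map.1 hj', Ultrafilter.mem_map.1 (h ▸ hj')] with x hfx hgx
  exact hfx.trans hgx.symm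

/-- If `g` is bounded-to-one and the image ultrafilters `f(u)` and `g(u)` coincide,
then `f` and `g` agree `u`-almost everywhere. -/
theorem stmt_2 (f g : ℕ → ℕ)
    (hg : ∃ k : ℕ, ∀ m : ℕ, ∃ s : Finset ℕ, g ⁻¹' {m} ⊆ ↑s ∧ s.card ≤ k)
    (u : Ultrafilter ℕ) (h : u.map f = u.map g) :
    {n : ℕ | f n = g n} ∈ u := by
  obtain ⟨k, hk⟩ := hg
  choose t ht htk using hk
  set G := SimpleGraph.fromRel fun a b ↦ ∃ n, g n = a ∧ f n = b
  have hadj : ∀ v w, G.Adj v w → w ∈ (t v).image f ∨ v ∈ (t w).image f := by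
    rintro v w ⟨-, ⟨n, rfl, rfl⟩ | ⟨n, rfl, rfl⟩⟩
    · exact .inl (mem_image_of_mem f (ht _ rfl))
    · exact .inr (mem_image_of_mem f (ht _ rfl))
  obtain ⟨c⟩ :=
    SimpleGraph.colorable_of_forall_adj_mem_or_mem _ (fun v ↦ card_image_le.trans (htk v)) hadj
  filter_upwards [u.eventually_comp_eq_of_map_eq h c] with n hn
  by_contra hne
  exact c.valid (SimpleGraph.fromRel_adj _ _ _ |>.2 ⟨hne, .inr ⟨n, rfl, rfl⟩⟩) hn
end

section
/- Let w be a Ramsey witness on ℕ × ℕ and let f, g : ℕ → ℕ. Then: (1) the two marginals of w coincide, i.e. the image of w under the first coordinate projection equals its image under the second coordinate projection; (2) {(a, b) | f(a) < b} ∈ w; (3) if {(a, b) | g(a) ≠ g(b)} ∈ w then {(a, b) | f(a) < g(b)} ∈ w; (4) if g is finite-to-one (every fiber g⁻¹({m}) is finite) then {(a, b) | f(a) < g(b)} ∈ w; (5) if {(a, b) | f(a) ≠ f(b)} ∈ w then the image of w under the map (a, b) ↦ (f(a), f(b)) is again a Ramsey witness. -/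
lemma aux_mono {H : Set ℕ} (hH : H.Infinite) {f : ℕ → ℕ}
    (hf : ∀ a ∈ H, ∀ b ∈ H, a < b → f a ≠ f b) :
    ∃ φ : ℕ → ℕ, StrictMono φ ∧ StrictMono (f ∘ φ) ∧ ∀ n, φ n ∈ H := by
  have hinj : Set.InjOn f H := by
    intro a ha b hb hab
    by_contra hne
    rcases lt_or_gt_of_ne hne with h | h
    · exact hf a ha b hb h hab
    · exact hf b hb a ha h hab.symm
  have claim : ∀ n m : ℕ, ∃ y, y ∈ H ∧ n < y ∧ m < f y := by
    intro n m
    have hfin : (H ∩ f ⁻¹' Set.Iic m).Finite := by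
      apply Set.Finite.of_finite_image (f := f)
      · exact (Set.finite_Iic m).subset (by rintro x ⟨y, ⟨-, hy⟩, rfl⟩; exact hy)
      · exact hinj.mono Set.inter_subset_left
    have hinf : (H \ (Set.Iic n ∪ (H ∩ f ⁻¹' Set.Iic m))).Infinite :=
      hH.diff ((Set.finite_Iic n).union hfin)
    obtain ⟨y, hy⟩ := hinf.nonempty
    refine ⟨y, hy.1, ?_, ?_⟩
    · by_contra h; exact hy.2 (Or.inl (Nat.le_of_not_lt h))
    · by_contra h; exact hy.2 (Or.inr ⟨hy.1, Nat.le_of_not_lt h⟩)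
  choose F hFH hF1 hF2 using claim
  let φ : ℕ → ℕ := fun n => Nat.rec (F 0 0) (fun _ prev => F prev (f prev)) n
  have hφ : ∀ n, φ n ∈ H := by
    intro n
    cases n with
    | zero => exact hFH 0 0
    | succ k => exact hFH _ _
  have h1 : ∀ n, φ n < φ (n + 1) := fun n => hF1 (φ n) (f (φ n))
  have h2 : ∀ n, (f ∘ φ) n < (f ∘ φ) (n + 1) := fun n => hF2 (φ n) (f (φ n))
  exact ⟨φ, strictMono_nat_of_lt_succ h1, strictMono_nat_of_lt_succ h2, hφ⟩

/-- Basic properties of Ramsey witnesses. -/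
theorem stmt_3 (w : Ultrafilter (ℕ × ℕ)) (hw : IsRamseyWitness w) (f g : ℕ → ℕ) :
    (w.map Prod.fst = w.map Prod.snd) ∧
    ({p : ℕ × ℕ | f p.1 < p.2} ∈ w) ∧
    ({p : ℕ × ℕ | g p.1 ≠ g p.2} ∈ w → {p : ℕ × ℕ | f p.1 < g p.2} ∈ w) ∧
    ((∀ m : ℕ, (g ⁻¹' {m}).Finite) → {p : ℕ × ℕ | f p.1 < g p.2} ∈ w) ∧
    ({p : ℕ × ℕ | f p.1 ≠ f p.2} ∈ w →
      IsRamseyWitness (w.map fun p => (f p.1, f p.2))) := by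
  have main1 : ∀ B : Set ℕ, B ∈ w.map Prod.fst → B ∈ w.map Prod.snd := by
    intro B hB
    rw [Ultrafilter.mem_map] at hB ⊢
    by_contra hc
    have hc' : (Prod.snd ⁻¹' B)ᶜ ∈ w := Ultrafilter.compl_mem_iff_notMem.2 hc
    obtain ⟨H, hHinf, hH⟩ := hw _ (Filter.inter_mem hB hc')
    obtain ⟨h₁, hh₁⟩ := hHinf.nonempty
    obtain ⟨h₂, hh₂, h12⟩ := hHinf.exists_gt h₁
    obtain ⟨h₃, hh₃, h23⟩ := hHinf.exists_gt h₂
    have p12 := hH h₁ hh₁ h₂ hh₂ h12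
    have p23 := hH h₂ hh₂ h₃ hh₃ h23
    exact p12.2 p23.1
  refine ⟨?_, ?_, ?_, ?_, ?_⟩
  · ext B
    constructor
    · exact main1 B
    · intro hB
      by_contra hc
      have hc' : Bᶜ ∈ w.map Prod.fst := Ultrafilter.compl_mem_iff_notMem.2 hc
      exact (Ultrafilter.compl_mem_iff_notMem.1 (main1 Bᶜ hc')) hB
  · by_contra hc
    have hc' : {p : ℕ × ℕ | f p.1 < p.2}ᶜ ∈ w := Ultrafilter.compl_mem_iff_notMem.2 hc
    obtain ⟨H, hHinf, hH⟩ := hw _ hc'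
    obtain ⟨h₁, hh₁⟩ := hHinf.nonempty
    obtain ⟨h₂, hh₂, h12⟩ := hHinf.exists_gt (max h₁ (f h₁))
    have := hH h₁ hh₁ h₂ hh₂ (lt_of_le_of_lt (le_max_left _ _) h12)
    exact this (lt_of_le_of_lt (le_max_right _ _) h12)
  · intro hne
    by_contra hc
    have hc' : {p : ℕ × ℕ | f p.1 < g p.2}ᶜ ∈ w := Ultrafilter.compl_mem_iff_notMem.2 hc
    obtain ⟨H, hHinf, hH⟩ := hw _ (Filter.inter_mem hne hc')
    obtain ⟨h₀, hh₀⟩ := hHinf.nonempty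
    have hTinf : (H \ Set.Iic h₀).Infinite := hHinf.diff (Set.finite_Iic h₀)
    have hmemH : ∀ h ∈ H \ Set.Iic h₀, h ∈ H ∧ h₀ < h := fun h hh =>
      ⟨hh.1, Nat.lt_of_not_le hh.2⟩
    have himg : f '' ∅ = ∅ := by simp
    have hinj : Set.InjOn g (H \ Set.Iic h₀) := by
      intro a ha b hb hab
      by_contra hne'
      rcases lt_or_gt_of_ne hne' with h | h
      · exact (hH a (hmemH a ha).1 b (hmemH b hb).1 h).1 hab
      · exact (hH b (hmemH b hb).1 a (hmemH a ha).1 h).1 hab.symm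
    have hfin : (H \ Set.Iic h₀).Finite := by
      apply Set.Finite.of_finite_image (f := g) _ hinj
      apply (Set.finite_Iic (f h₀)).subset
      rintro x ⟨y, hy, rfl⟩
      exact Nat.le_of_not_lt (hH h₀ hh₀ y (hmemH y hy).1 (hmemH y hy).2).2
    exact hTinf hfin
  · intro hg
    by_contra hc
    have hc' : {p : ℕ × ℕ | f p.1 < g p.2}ᶜ ∈ w := Ultrafilter.compl_mem_iff_notMem.2 hc
    obtain ⟨H, hHinf, hH⟩ := hw _ hc'
    obtain ⟨h₀, hh₀⟩ := hHinf.nonempty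
    have hsub : H \ Set.Iic h₀ ⊆ g ⁻¹' Set.Iic (f h₀) := by
      intro h hh
      exact Nat.le_of_not_lt (hH h₀ hh₀ h hh.1 (Nat.lt_of_not_le hh.2))
    have hfin : (g ⁻¹' Set.Iic (f h₀)).Finite := by
      have hsub2 : g ⁻¹' Set.Iic (f h₀) ⊆ ⋃ m ∈ Set.Iic (f h₀), g ⁻¹' {m} := by
        intro x hx
        exact Set.mem_biUnion hx rfl
      exact ((Set.finite_Iic (f h₀)).biUnion fun m _ => hg m).subset hsub2
    exact (hHinf.diff (Set.finite_Iic h₀)) (hfin.subset hsub)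
  · intro hne A hA
    rw [Ultrafilter.mem_map] at hA
    obtain ⟨H, hHinf, hH⟩ := hw _ (Filter.inter_mem hne hA)
    have hfne : ∀ a ∈ H, ∀ b ∈ H, a < b → f a ≠ f b := fun a ha b hb hab =>
      (hH a ha b hb hab).1
    obtain ⟨φ, hφ1, hφ2, hφH⟩ := aux_mono hHinf hfne
    refine ⟨Set.range (f ∘ φ), Set.infinite_range_of_injective hφ2.injective, ?_⟩
    rintro k₁ ⟨i, rfl⟩ k₂ ⟨j, rfl⟩ hlt
    have hij : i < j := hφ2.lt_iff_lt.1 hlt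
    exact (hH (φ i) (hφH i) (φ j) (hφH j) (hφ1 hij)).2
end

section
/- Let w be a Ramsey witness on ℕ × ℕ, let u be the image of w under the first coordinate projection, let f, g : ℕ → ℤ be such that the image ultrafilters f(u) and g(u) on ℤ are nonprincipal, and let k₁, k₂, k₃, k₄ ∈ ℤ. Then the image of w under the map (a, b) ↦ (f(a) + f(b) + k₁, g(a) + g(b) + k₂) is different from the image of w under the map (a, b) ↦ (f(a) + k₃, g(b) + k₄) (as ultrafilters on ℤ × ℤ). -/
/-- 4-coloring of `ℤ/m ∖ {0}` (for odd `m`) such that `t` and `2t mod m` always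
get different colors. -/
def colF (m t : ℕ) : ℕ :=
  if 2 * t < m then Nat.log 2 (m / t) % 2 else 2 + Nat.log 2 (m / (m - t)) % 2

lemma colF_le (m t : ℕ) : colF m t ≤ 3 := by
  unfold colF; split <;> omega

lemma colF_ne {m t : ℕ} (hm : m % 2 = 1) (h0 : 0 < t) (h1 : t < m) :
    colF m ((2 * t) % m) ≠ colF m t := by
  by_cases hA : 2 * t < m
  · -- no wrap
    have hmod : (2 * t) % m = 2 * t := Nat.mod_eq_of_lt hA
    rw [hmod]
    by_cases hB : 2 * (2 * t) < m
    · -- both in lower region : log flips parity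
      have hL : 1 ≤ Nat.log 2 (m / t) := by
        refine Nat.log_pos (by omega) ?_
        rw [Nat.le_div_iff_mul_le h0]; omega
      have hdiv : m / (2 * t) = m / t / 2 := by
        rw [Nat.div_div_eq_div_mul, Nat.mul_comm t 2]
      have hlog : Nat.log 2 (m / (2 * t)) = Nat.log 2 (m / t) - 1 := by
        rw [hdiv, Nat.log_div_base]
      unfold colF
      rw [if_pos hB, if_pos hA, hlog]
      omega
    · unfold colF
      rw [if_neg hB, if_pos hA]
      omega
  · -- t in upper region
    have hgt : m < 2 * t := by
      rcases Nat.lt_or_ge m (2*t) with h | h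
      · exact h
      · exfalso; have : 2 * t = m := by omega
        omega
    have hmod : (2 * t) % m = 2 * t - m := by
      have h2 : 2 * t - m < m := by omega
      rw [Nat.mod_eq_sub_mod (by omega), Nat.mod_eq_of_lt h2]
    rw [hmod]
    by_cases hB : 2 * (2 * t - m) < m
    · unfold colF
      rw [if_pos hB, if_neg (by omega)]
      omega
    · -- both upper : log on complement flips parity
      have hmt : 0 < m - t := by omega
      have hL : 1 ≤ Nat.log 2 (m / (m - t)) := by
        refine Nat.log_pos (by omega) ?_
        rw [Nat.le_div_iff_mul_le hmt]; omega
      have hsub : m - (2 * t - m) = 2 * (m - t) := by omega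
      have hdiv : m / (2 * (m - t)) = m / (m - t) / 2 := by
        rw [Nat.div_div_eq_div_mul, Nat.mul_comm (m-t) 2]
      have hlog : Nat.log 2 (m / (m - (2*t - m))) = Nat.log 2 (m / (m - t)) - 1 := by
        rw [hsub, hdiv, Nat.log_div_base]
      unfold colF
      rw [if_neg (by omega), if_neg (by omega), hlog]
      omega

/-- `MM n = 3 * 5 * ⋯ * (2n+1)`, an increasing chain of odd moduli with
`MM n ∣ MM (n+1)`. -/
def MM : ℕ → ℕ
  | 0 => 1
  | n + 1 => MM n * (2 * n + 3)

lemma MM_pos (n : ℕ) : 0 < MM n := by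
  induction n with
  | zero => simp [MM]
  | succ n ih =>
      have h : MM (n+1) = MM n * (2*n+3) := rfl
      rw [h]; exact Nat.mul_pos ih (by omega)

lemma MM_ge (n : ℕ) : n + 1 ≤ MM n := by
  induction n with
  | zero => simp [MM]
  | succ n ih =>
      have := MM_pos n
      have h : MM (n+1) = MM n * (2*n+3) := rfl
      nlinarith

lemma MM_odd (n : ℕ) : MM n % 2 = 1 := by
  induction n with
  | zero => simp [MM]
  | succ n ih =>
      have h : MM (n+1) = MM n * (2*n+3) := rfl
      rw [h, Nat.mul_mod, ih]
      omega

lemma MM_dvd {m n : ℕ} (h : m ≤ n) : MM m ∣ MM n := by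
  induction n with
  | zero => rw [Nat.le_zero.mp h]
  | succ n ih =>
      rcases Nat.lt_or_ge m (n+1) with h' | h'
      · exact dvd_trans (ih (by omega)) ⟨2*n+3, rfl⟩
      · have : m = n + 1 := by omega
        subst this; rfl

/-- If `m` is odd and `m ∣ 2x` then `m ∣ x` (over ℤ). -/
lemma odd_dvd_half {m : ℕ} (hm : m % 2 = 1) {x : ℤ} (h : (m : ℤ) ∣ 2 * x) :
    (m : ℤ) ∣ x := by
  have hcop : IsCoprime (m : ℤ) 2 := by
    rw [Int.isCoprime_iff_gcd_eq_one]
    have : (2 : ℤ) = ((2 : ℕ) : ℤ) := by norm_num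
    rw [this, Int.gcd_natCast_natCast]
    exact Nat.coprime_two_right.mpr (Nat.odd_iff.mpr hm)
  exact hcop.dvd_of_dvd_mul_left h

open Classical in
/-- Depth of `D`: largest `n` with `MM n ∣ D` (for `D ≠ 0`). -/
noncomputable def dep (D : ℤ) : ℕ :=
  Nat.findGreatest (fun n => ((MM n : ℤ) ∣ D)) D.natAbs

open Classical in
lemma dep_dvd (D : ℤ) : ((MM (dep D) : ℤ)) ∣ D := by
  unfold dep
  refine Nat.findGreatest_spec (P := fun n => ((MM n : ℤ) ∣ D)) (Nat.zero_le _) ?_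
  show ((MM 0 : ℕ) : ℤ) ∣ D
  norm_num [MM]

lemma natAbs_bound {D : ℤ} (hD : D ≠ 0) {c : ℕ} (h : (MM c : ℤ) ∣ D) :
    c + 1 ≤ D.natAbs := by
  have h1 : MM c ∣ D.natAbs := by
    have := Int.natAbs_dvd_natAbs.mpr h
    simpa using this
  have h2 : MM c ≤ D.natAbs := Nat.le_of_dvd (Int.natAbs_pos.mpr hD) h1
  have := MM_ge c
  omega

open Classical in
lemma dep_not {D : ℤ} (hD : D ≠ 0) : ¬ ((MM (dep D + 1) : ℤ) ∣ D) := by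
  intro hdvd
  have hb : dep D + 1 ≤ D.natAbs := by
    have := natAbs_bound hD hdvd; omega
  have : dep D + 1 ≤ dep D := Nat.le_findGreatest hb hdvd
  omega

open Classical in
lemma dep_eq {D : ℤ} (hD : D ≠ 0) {c : ℕ} (h1 : (MM c : ℤ) ∣ D)
    (h2 : ¬ ((MM (c+1) : ℤ) ∣ D)) : dep D = c := by
  have hge : c ≤ dep D := Nat.le_findGreatest (by have := natAbs_bound hD h1; omega) h1
  have hle : dep D ≤ c := by
    by_contra hlt
    exact h2 (dvd_trans (Int.natCast_dvd_natCast.mpr (MM_dvd (by omega))) (dep_dvd D))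
  omega

/-- Residue of `D` at its top level. -/
noncomputable def alp (D : ℤ) : ℕ :=
  ((D / (MM (dep D) : ℤ)) % (2 * dep D + 3)).toNat

lemma alp_facts {D : ℤ} (hD : D ≠ 0) :
    0 < alp D ∧ alp D < 2 * dep D + 3 ∧
      ((alp D : ℤ) = (D / (MM (dep D) : ℤ)) % (2 * dep D + 3)) := by
  set c := dep D with hc
  set m : ℤ := ((2 * c + 3 : ℕ) : ℤ) with hm
  have hmpos : (0:ℤ) < m := by positivity
  obtain ⟨x, hx⟩ := dep_dvd D
  have hMpos : (0:ℤ) < (MM c : ℤ) := by exact_mod_cast MM_pos c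
  have hdivx : D / (MM c : ℤ) = x := by
    rw [hx, Int.mul_ediv_cancel_left _ (by positivity)]
  have hmodnn : 0 ≤ x % m := Int.emod_nonneg x (by positivity)
  have hmodlt : x % m < m := Int.emod_lt_of_pos x hmpos
  have halp : (alp D : ℤ) = x % m := by
    unfold alp
    rw [← hc, hdivx]
    have : ((2 : ℤ) * (c:ℤ) + 3) = m := by push_cast [hm]; ring
    rw [this, Int.toNat_of_nonneg hmodnn]
  have hne : x % m ≠ 0 := by
    intro h0
    have : m ∣ x := Int.dvd_of_emod_eq_zero h0
    obtain ⟨y, hy⟩ := this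
    apply dep_not hD
    have : D = (MM (c+1) : ℤ) * y := by
      rw [hx, hy, hm]
      have : (MM (c+1) : ℤ) = (MM c : ℤ) * ((2*c+3 : ℕ) : ℤ) := by
        push_cast [MM]; ring
      rw [this]; ring
    exact ⟨y, this⟩
  constructor
  · have : (0:ℤ) < (alp D : ℤ) := by rw [halp]; omega
    exact_mod_cast this
  constructor
  · have : (alp D : ℤ) < m := by rw [halp]; omega
    have hmm : m = ((2 * c + 3 : ℕ) : ℤ) := hm
    rw [hmm] at this
    exact_mod_cast this
  · rw [halp, hdivx]
    have hmm : m = 2 * (c:ℤ) + 3 := by rw [hm]; push_cast; ring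
    rw [hmm]

lemma MM_succ_cast (c : ℕ) : (MM (c+1) : ℤ) = (MM c : ℤ) * ((2*c+3 : ℕ) : ℤ) := by
  push_cast [MM]; ring

lemma dep_add_lt {D₁ D₂ : ℤ} (h1 : D₁ ≠ 0) (h2 : D₂ ≠ 0)
    (h : dep D₁ < dep D₂) : D₁ + D₂ ≠ 0 ∧ dep (D₁ + D₂) = dep D₁ := by
  set c := dep D₁ with hc
  have hd1 : (MM c : ℤ) ∣ D₁ := dep_dvd D₁
  have hd2 : (MM (c+1) : ℤ) ∣ D₂ :=
    dvd_trans (Int.natCast_dvd_natCast.mpr (MM_dvd (by omega))) (dep_dvd D₂)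
  have hnd1 : ¬ ((MM (c+1) : ℤ) ∣ D₁) := dep_not h1
  have hd2' : (MM c : ℤ) ∣ D₂ := dvd_trans (Int.natCast_dvd_natCast.mpr (MM_dvd (by omega))) hd2
  have hnsum : ¬ ((MM (c+1) : ℤ) ∣ (D₁ + D₂)) := by
    intro hs
    exact hnd1 (by have := dvd_sub hs hd2; simpa using this)
  have hne : D₁ + D₂ ≠ 0 := by
    intro h0
    exact hnsum (by rw [h0]; exact dvd_zero _)
  exact ⟨hne, dep_eq hne (dvd_add hd1 hd2') hnsum⟩

lemma dep_add_same {D₁ D₂ : ℤ} (h1 : D₁ ≠ 0) (h2 : D₂ ≠ 0)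
    (hd : dep D₂ = dep D₁) (ha : alp D₂ = alp D₁) :
    D₁ + D₂ ≠ 0 ∧ dep (D₁ + D₂) = dep D₁ ∧
      alp (D₁ + D₂) = (2 * alp D₁) % (2 * dep D₁ + 3) := by
  obtain ⟨x₁, hx₁⟩ := dep_dvd D₁
  obtain ⟨x₂, hx₂⟩ := dep_dvd D₂
  rw [hd] at hx₂
  obtain ⟨hp1, hl1, he1⟩ := alp_facts h1
  obtain ⟨hp2, hl2, he2⟩ := alp_facts h2
  rw [hd] at he2
  rw [ha] at he2
  have hMpos : (0:ℤ) < (MM (dep D₁) : ℤ) := by exact_mod_cast MM_pos (dep D₁)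
  have hdiv1 : D₁ / (MM (dep D₁) : ℤ) = x₁ := by
    have h := Int.mul_ediv_cancel_left x₁ (a := (MM (dep D₁) : ℤ)) (by positivity)
    rw [← hx₁] at h; exact h
  have hdiv2 : D₂ / (MM (dep D₁) : ℤ) = x₂ := by
    have h := Int.mul_ediv_cancel_left x₂ (a := (MM (dep D₁) : ℤ)) (by positivity)
    rw [← hx₂] at h; exact h
  rw [hdiv1] at he1
  rw [hdiv2] at he2
  -- he1 : ↑(alp D₁) = x₁ % (2 * ↑(dep D₁) + 3), similarly he2 for x₂
  have htpos : (0:ℤ) < (alp D₁ : ℤ) := by exact_mod_cast hp1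
  have htlt : (alp D₁ : ℤ) < 2 * (dep D₁ : ℤ) + 3 := by
    have := hl1; push_cast; omega
  have hsum : D₁ + D₂ = (MM (dep D₁) : ℤ) * (x₁ + x₂) := by
    rw [mul_add, ← hx₁, ← hx₂]
  have hsummod : (x₁ + x₂) % (2 * (dep D₁ : ℤ) + 3) = (2 * (alp D₁ : ℤ)) % (2 * (dep D₁ : ℤ) + 3) := by
    rw [Int.add_emod, ← he1, ← he2]
    have h2 : 2 * (alp D₁ : ℤ) = (alp D₁ : ℤ) + (alp D₁ : ℤ) := two_mul _
    rw [h2]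
  have h2t : ¬ ((2 * (dep D₁ : ℤ) + 3) ∣ 2 * (alp D₁ : ℤ)) := by
    intro hdvd
    have hcast : (2 * (dep D₁ : ℤ) + 3) = ((2 * dep D₁ + 3 : ℕ) : ℤ) := by push_cast; ring
    rw [hcast] at hdvd
    have := odd_dvd_half (m := 2 * dep D₁ + 3) (by omega) hdvd
    have habs : ((2 * dep D₁ + 3 : ℕ) : ℤ) ≤ (alp D₁ : ℤ) := Int.le_of_dvd htpos this
    rw [← hcast] at habs
    omega
  have hsne : (x₁ + x₂) % (2 * (dep D₁ : ℤ) + 3) ≠ 0 := by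
    rw [hsummod]
    intro h0
    exact h2t (Int.dvd_of_emod_eq_zero h0)
  have hnsum : ¬ ((MM (dep D₁ + 1) : ℤ) ∣ (D₁ + D₂)) := by
    intro hs
    rw [hsum, MM_succ_cast] at hs
    have hdd : ((2 * dep D₁ + 3 : ℕ) : ℤ) ∣ (x₁ + x₂) :=
      (mul_dvd_mul_iff_left (a := (MM (dep D₁) : ℤ)) (by positivity)).mp hs
    apply hsne
    apply Int.emod_eq_zero_of_dvd
    have hcast : (2 * (dep D₁ : ℤ) + 3) = ((2 * dep D₁ + 3 : ℕ) : ℤ) := by push_cast; ring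
    rw [hcast]
    exact hdd
  have hne : D₁ + D₂ ≠ 0 := by
    intro h0; exact hnsum (by rw [h0]; exact dvd_zero _)
  have hdvdsum : (MM (dep D₁) : ℤ) ∣ (D₁ + D₂) := dvd_add ⟨x₁, hx₁⟩ ⟨x₂, hx₂⟩
  have hdep : dep (D₁ + D₂) = dep D₁ := dep_eq hne hdvdsum hnsum
  refine ⟨hne, hdep, ?_⟩
  obtain ⟨hp3, hl3, he3⟩ := alp_facts hne
  rw [hdep] at he3
  have hdiv3 : (D₁ + D₂) / (MM (dep D₁) : ℤ) = x₁ + x₂ := by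
    have h := Int.mul_ediv_cancel_left (x₁ + x₂) (a := (MM (dep D₁) : ℤ)) (by positivity)
    rw [← hsum] at h; exact h
  rw [hdiv3] at he3
  have hzz : (alp (D₁ + D₂) : ℤ) = (((2 * alp D₁) % (2 * dep D₁ + 3) : ℕ) : ℤ) := by
    rw [he3, hsummod]
    push_cast
    ring_nf
  exact_mod_cast hzz

lemma ramsey_seq {w : Ultrafilter (ℕ × ℕ)} (hw : IsRamseyWitness w)
    {A : Set (ℕ × ℕ)} (hA : A ∈ w) :
    ∃ s : ℕ → ℕ, StrictMono s ∧ ∀ i j, i < j → (s i, s j) ∈ A := by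
  obtain ⟨H, hinf, hH⟩ := hw A hA
  have hinf' : {n | n ∈ H}.Infinite := by rw [Set.setOf_mem_eq]; exact hinf
  refine ⟨Nat.nth (· ∈ H), Nat.nth_strictMono hinf', fun i j hij => ?_⟩
  exact hH _ (Nat.nth_mem_of_infinite hinf' i) _ (Nat.nth_mem_of_infinite hinf' j)
    ((Nat.nth_lt_nth hinf').mpr hij)

/-- Coloring of `ℤ` adapted to a shift `c` : color of `y` is determined by the
depth/residue data of `y + c`. -/
noncomputable def iot (c : ℤ) (y : ℤ) : ℕ :=
  if y + c = 0 then 9 else colF (2 * dep (y + c) + 3) (alp (y + c))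

lemma iot_le (c y : ℤ) : iot c y ≤ 9 := by
  unfold iot; split
  · omega
  · have := colF_le (2 * dep (y + c) + 3) (alp (y + c)); omega

lemma iot_eq {c y : ℤ} (h : y + c ≠ 0) :
    iot c y = colF (2 * dep (y + c) + 3) (alp (y + c)) := if_neg h

/-- No nonprincipal-like ultrafilter on ℤ is fixed by `z ↦ 2z + d`. -/
lemma no_affine_fixed (θ : Ultrafilter ℤ) (d : ℤ)
    (hnd : {z : ℤ | z + d ≠ 0} ∈ θ)
    (hfix : ∀ X : Set ℤ, (fun z : ℤ => 2 * z + d) ⁻¹' X ∈ θ ↔ X ∈ θ) : False := by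
  have hIic : Set.Iic 9 ∈ θ.map (iot d) := by
    rw [Ultrafilter.mem_map]
    have : (iot d) ⁻¹' (Set.Iic 9) = Set.univ := by
      ext z; simp [iot_le]
    rw [this]; exact Filter.univ_mem
  obtain ⟨i₀, -, hpure⟩ := Ultrafilter.eq_pure_of_finite_mem (Set.finite_Iic 9) hIic
  have hX : (iot d) ⁻¹' {i₀} ∈ θ := by
    rw [← Ultrafilter.mem_map, hpure]
    rfl
  have hX2 : (fun z : ℤ => 2 * z + d) ⁻¹' ((iot d) ⁻¹' {i₀}) ∈ θ := (hfix _).mpr hX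
  obtain ⟨z, hz⟩ := Filter.nonempty_of_mem (Filter.inter_mem (Filter.inter_mem hX hX2) hnd)
  obtain ⟨⟨hz1, hz2⟩, hz3⟩ := hz
  have hz3 : z + d ≠ 0 := hz3
  have hz1' : iot d z = i₀ := hz1
  have hz2' : iot d (2 * z + d) = i₀ := hz2
  -- the shifted point has deviation 2 * (z + d)
  obtain ⟨hne, hdep, halp⟩ := dep_add_same hz3 hz3 rfl rfl
  have hdev : (2 * z + d) + d = (z + d) + (z + d) := by ring
  obtain ⟨hpos, hlt, -⟩ := alp_facts hz3
  have hv1 : iot d z = colF (2 * dep (z + d) + 3) (alp (z + d)) := iot_eq hz3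
  have hv2 : iot d (2 * z + d) =
      colF (2 * dep (z + d) + 3) ((2 * alp (z + d)) % (2 * dep (z + d) + 3)) := by
    rw [iot_eq (by rw [hdev]; exact hne), hdev, hdep, halp]
  have := colF_ne (m := 2 * dep (z + d) + 3) (t := alp (z + d)) (by omega) hpos hlt
  rw [← hv1, ← hv2, hz1', hz2'] at this
  exact this rfl

theorem stmt_6 (w : Ultrafilter (ℕ × ℕ)) (hw : IsRamseyWitness w)
    (f g : ℕ → ℤ)
    (hf : ∀ A : Set ℤ, A.Finite → A ∉ (w.map Prod.fst).map f)
    (hg : ∀ A : Set ℤ, A.Finite → A ∉ (w.map Prod.fst).map g)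
    (k₁ k₂ k₃ k₄ : ℤ) :
    (w.map fun p => (f p.1 + f p.2 + k₁, g p.1 + g p.2 + k₂)) ≠
      (w.map fun p => (f p.1 + k₃, g p.2 + k₄)) := by
  intro EQ
  -- generic transfer between `w.map Prod.fst` and `w`
  have hfst : ∀ P : ℕ → Prop, {a | P a} ∈ w.map Prod.fst → {p : ℕ × ℕ | P p.1} ∈ w :=
    fun P hP => Ultrafilter.mem_map.mp hP
  have hfst' : ∀ P : ℕ → Prop, {p : ℕ × ℕ | P p.1} ∈ w → {a | P a} ∈ w.map Prod.fst :=
    fun P hP => Ultrafilter.mem_map.mpr hP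
  have hsnd : ∀ P : ℕ → Prop, {a | P a} ∈ w.map Prod.fst → {p : ℕ × ℕ | P p.2} ∈ w := by
    intro P hP
    by_contra hc
    have h2 : {p : ℕ × ℕ | P p.2}ᶜ ∈ w := Ultrafilter.compl_mem_iff_notMem.mpr hc
    obtain ⟨s, smono, hs⟩ := ramsey_seq hw (Filter.inter_mem (hfst P hP) h2)
    exact (hs 0 1 (by omega)).2 (hs 1 2 (by omega)).1
  have hsnd_iff : ∀ P : ℕ → Prop,
      ({p : ℕ × ℕ | P p.2} ∈ w ↔ {a | P a} ∈ w.map Prod.fst) := by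
    intro P
    constructor
    · intro h
      by_contra hc
      have hcc : {a | ¬ P a} ∈ w.map Prod.fst := by
        have h3 := Ultrafilter.compl_mem_iff_notMem.mpr hc
        have h4 : ({a | P a}ᶜ : Set ℕ) = {a | ¬ P a} := by ext a; simp
        rwa [h4] at h3
      have h2 := hsnd _ hcc
      have h5 : ({p : ℕ × ℕ | P p.2} ∩ {p : ℕ × ℕ | ¬ P p.2} : Set (ℕ × ℕ)) = ∅ := by
        ext p; simp
      have h6 := Filter.inter_mem h h2
      rw [h5] at h6
      exact Filter.empty_notMem (w : Filter (ℕ × ℕ)) h6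
    · exact hsnd P
  by_cases hdegf : {p : ℕ × ℕ | f p.1 = f p.2} ∈ w
  · -- Case 1 : f is w-degenerate
    refine no_affine_fixed ((w.map Prod.fst).map f) (k₁ - k₃) ?_ ?_
    · have hsing := hf {-(k₁ - k₃)} (Set.finite_singleton _)
      have hcc := Ultrafilter.compl_mem_iff_notMem.mpr hsing
      have : ({-(k₁ - k₃)}ᶜ : Set ℤ) = {z : ℤ | z + (k₁ - k₃) ≠ 0} := by
        ext z; simp; constructor <;> intro h <;> omega
      rwa [this] at hcc
    · intro X
      have hQ2 : ({q : ℤ × ℤ | q.1 - k₃ ∈ X} ∈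
          (w.map fun p => ((f p.1 + k₃ : ℤ), (g p.2 + k₄ : ℤ)))) ↔
          {a | f a ∈ X} ∈ w.map Prod.fst := by
        rw [Ultrafilter.mem_map]
        have hset : ((fun p : ℕ × ℕ => ((f p.1 + k₃ : ℤ), (g p.2 + k₄ : ℤ))) ⁻¹'
            {q : ℤ × ℤ | q.1 - k₃ ∈ X}) = {p : ℕ × ℕ | f p.1 ∈ X} := by
          ext p; simp [add_sub_cancel_right]
        rw [hset]
        exact ⟨hfst' (fun a => f a ∈ X), hfst (fun a => f a ∈ X)⟩
      have hQ1 : ({q : ℤ × ℤ | q.1 - k₃ ∈ X} ∈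
          (w.map fun p => (f p.1 + f p.2 + k₁, g p.1 + g p.2 + k₂))) ↔
          {a | 2 * f a + (k₁ - k₃) ∈ X} ∈ w.map Prod.fst := by
        rw [Ultrafilter.mem_map]
        have hset : ((fun p : ℕ × ℕ => ((f p.1 + f p.2 + k₁ : ℤ), (g p.1 + g p.2 + k₂ : ℤ))) ⁻¹'
            {q : ℤ × ℤ | q.1 - k₃ ∈ X}) = {p : ℕ × ℕ | f p.1 + f p.2 + k₁ - k₃ ∈ X} := by
          ext p; simp
        rw [hset]
        constructor
        · intro h
          refine hfst' (fun a => 2 * f a + (k₁ - k₃) ∈ X) ?_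
          refine Filter.mem_of_superset (Filter.inter_mem h hdegf) ?_
          rintro p ⟨hp1, hp2⟩
          simp only [Set.mem_setOf_eq] at *
          have : 2 * f p.1 + (k₁ - k₃) = f p.1 + f p.2 + k₁ - k₃ := by rw [← hp2]; ring
          rwa [this]
        · intro h
          refine Filter.mem_of_superset (Filter.inter_mem (hfst _ h) hdegf) ?_
          rintro p ⟨hp1, hp2⟩
          simp only [Set.mem_setOf_eq] at *
          have : f p.1 + f p.2 + k₁ - k₃ = 2 * f p.1 + (k₁ - k₃) := by rw [← hp2]; ring
          rwa [this]
      have hmid : ({q : ℤ × ℤ | q.1 - k₃ ∈ X} ∈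
          (w.map fun p => (f p.1 + f p.2 + k₁, g p.1 + g p.2 + k₂))) ↔
          ({q : ℤ × ℤ | q.1 - k₃ ∈ X} ∈
          (w.map fun p => ((f p.1 + k₃ : ℤ), (g p.2 + k₄ : ℤ)))) := by rw [EQ]
      rw [Ultrafilter.mem_map, Ultrafilter.mem_map]
      exact (hQ1.symm.trans hmid).trans hQ2
  · by_cases hdegg : {p : ℕ × ℕ | g p.1 = g p.2} ∈ w
    · -- Case 2 : g is w-degenerate
      refine no_affine_fixed ((w.map Prod.fst).map g) (k₂ - k₄) ?_ ?_
      · have hsing := hg {-(k₂ - k₄)} (Set.finite_singleton _)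
        have hcc := Ultrafilter.compl_mem_iff_notMem.mpr hsing
        have : ({-(k₂ - k₄)}ᶜ : Set ℤ) = {z : ℤ | z + (k₂ - k₄) ≠ 0} := by
          ext z; simp; constructor <;> intro h <;> omega
        rwa [this] at hcc
      · intro X
        have hQ2 : ({q : ℤ × ℤ | q.2 - k₄ ∈ X} ∈
            (w.map fun p => ((f p.1 + k₃ : ℤ), (g p.2 + k₄ : ℤ)))) ↔
            {a | g a ∈ X} ∈ w.map Prod.fst := by
          rw [Ultrafilter.mem_map]
          have hset : ((fun p : ℕ × ℕ => ((f p.1 + k₃ : ℤ), (g p.2 + k₄ : ℤ))) ⁻¹'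
              {q : ℤ × ℤ | q.2 - k₄ ∈ X}) = {p : ℕ × ℕ | g p.2 ∈ X} := by
            ext p; simp [add_sub_cancel_right]
          rw [hset]
          exact hsnd_iff (fun a => g a ∈ X)
        have hQ1 : ({q : ℤ × ℤ | q.2 - k₄ ∈ X} ∈
            (w.map fun p => (f p.1 + f p.2 + k₁, g p.1 + g p.2 + k₂))) ↔
            {a | 2 * g a + (k₂ - k₄) ∈ X} ∈ w.map Prod.fst := by
          rw [Ultrafilter.mem_map]
          have hset : ((fun p : ℕ × ℕ => ((f p.1 + f p.2 + k₁ : ℤ), (g p.1 + g p.2 + k₂ : ℤ))) ⁻¹'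
              {q : ℤ × ℤ | q.2 - k₄ ∈ X}) = {p : ℕ × ℕ | g p.1 + g p.2 + k₂ - k₄ ∈ X} := by
            ext p; simp
          rw [hset]
          constructor
          · intro h
            refine hfst' (fun a => 2 * g a + (k₂ - k₄) ∈ X) ?_
            refine Filter.mem_of_superset (Filter.inter_mem h hdegg) ?_
            rintro p ⟨hp1, hp2⟩
            simp only [Set.mem_setOf_eq] at *
            have : 2 * g p.1 + (k₂ - k₄) = g p.1 + g p.2 + k₂ - k₄ := by rw [← hp2]; ring
            rwa [this]
          · intro h
            refine Filter.mem_of_superset (Filter.inter_mem (hfst _ h) hdegg) ?_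
            rintro p ⟨hp1, hp2⟩
            simp only [Set.mem_setOf_eq] at *
            have : g p.1 + g p.2 + k₂ - k₄ = 2 * g p.1 + (k₂ - k₄) := by rw [← hp2]; ring
            rwa [this]
        have hmid : ({q : ℤ × ℤ | q.2 - k₄ ∈ X} ∈
            (w.map fun p => (f p.1 + f p.2 + k₁, g p.1 + g p.2 + k₂))) ↔
            ({q : ℤ × ℤ | q.2 - k₄ ∈ X} ∈
            (w.map fun p => ((f p.1 + k₃ : ℤ), (g p.2 + k₄ : ℤ)))) := by rw [EQ]
        rw [Ultrafilter.mem_map, Ultrafilter.mem_map]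
        exact (hQ1.symm.trans hmid).trans hQ2
    · -- Case 3 : both nondegenerate
      have hndegf : {p : ℕ × ℕ | f p.1 ≠ f p.2} ∈ w := by
        have h3 := Ultrafilter.compl_mem_iff_notMem.mpr hdegf
        have h4 : ({p : ℕ × ℕ | f p.1 = f p.2}ᶜ : Set (ℕ × ℕ)) = {p | f p.1 ≠ f p.2} := by
          ext p; simp
        rwa [h4] at h3
      -- dg a := g a + (k₂ - k₄)
      have hT0 : {a : ℕ | g a + (k₂ - k₄) ≠ 0} ∈ w.map Prod.fst := by
        have hsing := hg {k₄ - k₂} (Set.finite_singleton _)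
        have hcc := Ultrafilter.compl_mem_iff_notMem.mpr hsing
        have hpre := Ultrafilter.mem_map.mp hcc
        refine Filter.mem_of_superset hpre ?_
        intro a ha
        simp only [Set.mem_preimage, Set.mem_compl_iff, Set.mem_singleton_iff] at ha
        simp only [Set.mem_setOf_eq]
        omega
      have hfstNE : {p : ℕ × ℕ | g p.1 + (k₂ - k₄) ≠ 0} ∈ w := hfst _ hT0
      have hsndNE : {p : ℕ × ℕ | g p.2 + (k₂ - k₄) ≠ 0} ∈ w := hsnd _ hT0
      -- trichotomy on depths
      have htri :
          ({p : ℕ × ℕ | g p.1 + (k₂ - k₄) ≠ 0 ∧ g p.2 + (k₂ - k₄) ≠ 0 ∧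
              dep (g p.1 + (k₂ - k₄)) < dep (g p.2 + (k₂ - k₄))} ∈ w) ∨
          ({p : ℕ × ℕ | g p.1 + (k₂ - k₄) ≠ 0 ∧ g p.2 + (k₂ - k₄) ≠ 0 ∧
              dep (g p.2 + (k₂ - k₄)) < dep (g p.1 + (k₂ - k₄))} ∈ w) ∨
          ({p : ℕ × ℕ | g p.1 + (k₂ - k₄) ≠ 0 ∧ g p.2 + (k₂ - k₄) ≠ 0 ∧
              dep (g p.1 + (k₂ - k₄)) = dep (g p.2 + (k₂ - k₄))} ∈ w) := by
        have hun : ({p : ℕ × ℕ | g p.1 + (k₂ - k₄) ≠ 0 ∧ g p.2 + (k₂ - k₄) ≠ 0 ∧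
              dep (g p.1 + (k₂ - k₄)) < dep (g p.2 + (k₂ - k₄))} ∪
            ({p : ℕ × ℕ | g p.1 + (k₂ - k₄) ≠ 0 ∧ g p.2 + (k₂ - k₄) ≠ 0 ∧
              dep (g p.2 + (k₂ - k₄)) < dep (g p.1 + (k₂ - k₄))} ∪
             {p : ℕ × ℕ | g p.1 + (k₂ - k₄) ≠ 0 ∧ g p.2 + (k₂ - k₄) ≠ 0 ∧
              dep (g p.1 + (k₂ - k₄)) = dep (g p.2 + (k₂ - k₄))})) ∈ w := by
          refine Filter.mem_of_superset (Filter.inter_mem hfstNE hsndNE) ?_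
          rintro p ⟨h1, h2⟩
          rcases lt_trichotomy (dep (g p.1 + (k₂ - k₄))) (dep (g p.2 + (k₂ - k₄))) with h | h | h
          · exact Or.inl ⟨h1, h2, h⟩
          · exact Or.inr (Or.inr ⟨h1, h2, h⟩)
          · exact Or.inr (Or.inl ⟨h1, h2, h⟩)
        rcases (Ultrafilter.union_mem_iff).mp hun with h | h
        · exact Or.inl h
        · rcases (Ultrafilter.union_mem_iff).mp h with h' | h'
          · exact Or.inr (Or.inl h')
          · exact Or.inr (Or.inr h')
      rcases htri with hE1 | hE2 | hE3
      · -- E1 : depths increase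
        -- Step A : the test set belongs to the Φ₂-image
        have hP2 : ((fun p : ℕ × ℕ => ((f p.1 + k₃ : ℤ), (g p.2 + k₄ : ℤ))) ⁻¹'
            {q : ℤ × ℤ | q.2 + (k₂ - 2*k₄) ≠ 0 ∧ |q.1| < (dep (q.2 + (k₂ - 2*k₄)) : ℤ)}) ∈ w := by
          by_contra hc
          have hcompl := Ultrafilter.compl_mem_iff_notMem.mpr hc
          obtain ⟨s, smono, hs⟩ := ramsey_seq hw (Filter.inter_mem hcompl hE1)
          have harg : ∀ b : ℕ, (g b + k₄) + (k₂ - 2*k₄) = g b + (k₂ - k₄) := by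
            intro b; ring
          have hbd : ∀ j, 0 < j →
              (dep (g (s j) + (k₂ - k₄)) : ℤ) ≤ |f (s 0) + k₃| := by
            intro j hj
            have h := hs 0 j hj
            have hnz : g (s j) + (k₂ - k₄) ≠ 0 := h.2.2.1
            have h1 := h.1
            simp only [Set.mem_compl_iff, Set.mem_preimage, Set.mem_setOf_eq] at h1
            rw [harg] at h1
            push_neg at h1
            exact h1 hnz
          have hmono : StrictMono (fun j => dep (g (s j) + (k₂ - k₄))) :=
            fun i j hij => (hs i j hij).2.2.2
          set N : ℕ := (|f (s 0) + k₃|).toNat + 1 with hN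
          have h1 := hbd N (by omega)
          have h2 : N ≤ dep (g (s N) + (k₂ - k₄)) := hmono.le_apply
          have h3 : (0:ℤ) ≤ |f (s 0) + k₃| := abs_nonneg _
          omega
        have hBmem : {q : ℤ × ℤ | q.2 + (k₂ - 2*k₄) ≠ 0 ∧ |q.1| < (dep (q.2 + (k₂ - 2*k₄)) : ℤ)}
            ∈ (w.map fun p => ((f p.1 + k₃ : ℤ), (g p.2 + k₄ : ℤ))) :=
          Ultrafilter.mem_map.mpr hP2
        rw [← EQ] at hBmem
        have hP1 := Ultrafilter.mem_map.mp hBmem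
        -- Step B : f-sums dominate the depth of the first coordinate
        have hFdom : {p : ℕ × ℕ | (dep (g p.1 + (k₂ - k₄)) : ℤ) < |f p.1 + f p.2 + k₁|} ∈ w := by
          by_contra hc
          have hcompl := Ultrafilter.compl_mem_iff_notMem.mpr hc
          obtain ⟨s, smono, hs⟩ :=
            ramsey_seq hw (Filter.inter_mem (Filter.inter_mem hcompl hndegf) hfstNE)
          set c₀ : ℤ := (dep (g (s 0) + (k₂ - k₄)) : ℤ) with hc₀
          have hbound : ∀ j : ℕ, f (s (j+1)) ∈ Set.Icc (-c₀ - f (s 0) - k₁) (c₀ - f (s 0) - k₁) := by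
            intro j
            have h := hs 0 (j+1) (by omega)
            have h1 := h.1.1
            simp only [Set.mem_compl_iff, Set.mem_setOf_eq] at h1
            push_neg at h1
            rw [abs_le] at h1
            constructor <;> [linarith [h1.1]; linarith [h1.2]]
          haveI : Finite (Set.Icc (-c₀ - f (s 0) - k₁) (c₀ - f (s 0) - k₁)) :=
            (Set.finite_Icc _ _).to_subtype
          obtain ⟨i, j, hne, heq⟩ := Finite.exists_ne_map_eq_of_infinite
            (fun j : ℕ => (⟨f (s (j+1)), hbound j⟩ : Set.Icc (-c₀ - f (s 0) - k₁) (c₀ - f (s 0) - k₁)))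
          have heq' : f (s (i+1)) = f (s (j+1)) := congrArg Subtype.val heq
          rcases Nat.lt_or_ge i j with hij | hij
          · exact (hs (i+1) (j+1) (by omega)).1.2 heq'
          · have hji : j < i := by omega
            exact (hs (j+1) (i+1) (by omega)).1.2 heq'.symm
        obtain ⟨s, smono, hs⟩ :=
          ramsey_seq hw (Filter.inter_mem (Filter.inter_mem hP1 hE1) hFdom)
        have h01 := hs 0 1 (by omega)
        obtain ⟨⟨hp1, he1'⟩, hfd⟩ := h01
        have hp1' : (g (s 0) + g (s 1) + k₂) + (k₂ - 2*k₄) ≠ 0 ∧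
            |f (s 0) + f (s 1) + k₁| <
              (dep ((g (s 0) + g (s 1) + k₂) + (k₂ - 2*k₄)) : ℤ) := hp1
        have hfd' : (dep (g (s 0) + (k₂ - k₄)) : ℤ) < |f (s 0) + f (s 1) + k₁| := hfd
        have hz0 : g (s 0) + (k₂ - k₄) ≠ 0 := he1'.1
        have hz1 : g (s 1) + (k₂ - k₄) ≠ 0 := he1'.2.1
        have hdlt : dep (g (s 0) + (k₂ - k₄)) < dep (g (s 1) + (k₂ - k₄)) := he1'.2.2
        have hargsum : (g (s 0) + g (s 1) + k₂) + (k₂ - 2*k₄)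
            = (g (s 0) + (k₂ - k₄)) + (g (s 1) + (k₂ - k₄)) := by ring
        obtain ⟨-, hdsum⟩ := dep_add_lt hz0 hz1 hdlt
        rw [hargsum, hdsum] at hp1'
        have := hp1'.2
        omega
      · -- E2 : depths strictly decrease, impossible
        obtain ⟨s, smono, hs⟩ := ramsey_seq hw hE2
        have hdec : ∀ i : ℕ, dep (g (s (i+1)) + (k₂ - k₄)) < dep (g (s i) + (k₂ - k₄)) :=
          fun i => (hs i (i+1) (by omega)).2.2
        have hchain : ∀ n : ℕ, dep (g (s n) + (k₂ - k₄)) + n ≤ dep (g (s 0) + (k₂ - k₄)) := by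
          intro n
          induction n with
          | zero => omega
          | succ n ih => have := hdec n; omega
        have := hchain (dep (g (s 0) + (k₂ - k₄)) + 1)
        omega
      · -- E3 : depths equal
        -- the alpha residues must also be w-equal
        have hAeq : {p : ℕ × ℕ | g p.1 + (k₂ - k₄) ≠ 0 ∧ g p.2 + (k₂ - k₄) ≠ 0 ∧
            dep (g p.1 + (k₂ - k₄)) = dep (g p.2 + (k₂ - k₄)) ∧
            alp (g p.1 + (k₂ - k₄)) = alp (g p.2 + (k₂ - k₄))} ∈ w := by
          by_contra hc
          have hne : {p : ℕ × ℕ | g p.1 + (k₂ - k₄) ≠ 0 ∧ g p.2 + (k₂ - k₄) ≠ 0 ∧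
              dep (g p.1 + (k₂ - k₄)) = dep (g p.2 + (k₂ - k₄)) ∧
              alp (g p.1 + (k₂ - k₄)) ≠ alp (g p.2 + (k₂ - k₄))} ∈ w := by
            have hun : ({p : ℕ × ℕ | g p.1 + (k₂ - k₄) ≠ 0 ∧ g p.2 + (k₂ - k₄) ≠ 0 ∧
                dep (g p.1 + (k₂ - k₄)) = dep (g p.2 + (k₂ - k₄)) ∧
                alp (g p.1 + (k₂ - k₄)) = alp (g p.2 + (k₂ - k₄))} ∪
                {p : ℕ × ℕ | g p.1 + (k₂ - k₄) ≠ 0 ∧ g p.2 + (k₂ - k₄) ≠ 0 ∧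
                dep (g p.1 + (k₂ - k₄)) = dep (g p.2 + (k₂ - k₄)) ∧
                alp (g p.1 + (k₂ - k₄)) ≠ alp (g p.2 + (k₂ - k₄))}) ∈ w := by
              refine Filter.mem_of_superset hE3 ?_
              rintro p ⟨h1, h2, h3⟩
              by_cases h : alp (g p.1 + (k₂ - k₄)) = alp (g p.2 + (k₂ - k₄))
              · exact Or.inl ⟨h1, h2, h3, h⟩
              · exact Or.inr ⟨h1, h2, h3, h⟩
            rcases (Ultrafilter.union_mem_iff).mp hun with h | h
            · exact absurd h hc
            · exact h
          obtain ⟨s, smono, hs⟩ := ramsey_seq hw hne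
          have hnz : ∀ j : ℕ, g (s j) + (k₂ - k₄) ≠ 0 := by
            intro j
            rcases Nat.eq_zero_or_pos j with h | h
            · rw [h]; exact (hs 0 1 (by omega)).1
            · exact (hs 0 j h).2.1
          have hdepc : ∀ j : ℕ, dep (g (s j) + (k₂ - k₄)) = dep (g (s 0) + (k₂ - k₄)) := by
            intro j
            rcases Nat.eq_zero_or_pos j with h | h
            · rw [h]
            · exact ((hs 0 j h).2.2.1).symm
          have hmem : ∀ j : ℕ, alp (g (s j) + (k₂ - k₄)) ∈
              Set.Icc 1 (2 * dep (g (s 0) + (k₂ - k₄)) + 3) := by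
            intro j
            obtain ⟨hp, hl, -⟩ := alp_facts (hnz j)
            rw [hdepc j] at hl
            exact ⟨hp, by omega⟩
          haveI : Finite (Set.Icc 1 (2 * dep (g (s 0) + (k₂ - k₄)) + 3)) :=
            (Set.finite_Icc _ _).to_subtype
          obtain ⟨i, j, hne', heq⟩ := Finite.exists_ne_map_eq_of_infinite
            (fun j : ℕ => (⟨alp (g (s j) + (k₂ - k₄)), hmem j⟩ :
              Set.Icc 1 (2 * dep (g (s 0) + (k₂ - k₄)) + 3)))
          have heq' : alp (g (s i) + (k₂ - k₄)) = alp (g (s j) + (k₂ - k₄)) :=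
            congrArg Subtype.val heq
          rcases Nat.lt_or_ge i j with hij | hij
          · exact (hs i j hij).2.2.2 heq'
          · have hji : j < i := by omega
            exact (hs j i hji).2.2.2 heq'.symm
        -- extract the pure color
        have hIic : Set.Iic 9 ∈ (w.map fun p : ℕ × ℕ => iot (k₂ - 2*k₄) (g p.2 + k₄)) := by
          rw [Ultrafilter.mem_map]
          have : ((fun p : ℕ × ℕ => iot (k₂ - 2*k₄) (g p.2 + k₄)) ⁻¹' Set.Iic 9) = Set.univ := by
            ext p; simp [iot_le]
          rw [this]; exact Filter.univ_mem
        obtain ⟨i₀, -, hpure⟩ := Ultrafilter.eq_pure_of_finite_mem (Set.finite_Iic 9) hIic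
        have hA2 : {p : ℕ × ℕ | iot (k₂ - 2*k₄) (g p.2 + k₄) = i₀} ∈ w := by
          have h1 : ({i₀} : Set ℕ) ∈
              (w.map fun p : ℕ × ℕ => iot (k₂ - 2*k₄) (g p.2 + k₄)) := by
            rw [hpure]; exact rfl
          exact Ultrafilter.mem_map.mp h1
        have hA1 : {p : ℕ × ℕ | iot (k₂ - 2*k₄) (g p.1 + g p.2 + k₂) = i₀} ∈ w := by
          have h1 : {q : ℤ × ℤ | iot (k₂ - 2*k₄) q.2 = i₀} ∈
              (w.map fun p => ((f p.1 + k₃ : ℤ), (g p.2 + k₄ : ℤ))) := by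
            rw [Ultrafilter.mem_map]
            exact hA2
          rw [← EQ] at h1
          exact Ultrafilter.mem_map.mp h1
        obtain ⟨s, smono, hs⟩ :=
          ramsey_seq hw (Filter.inter_mem (Filter.inter_mem hA1 hA2) hAeq)
        have h01 := hs 0 1 (by omega)
        obtain ⟨⟨ha1x, ha2x⟩, hAx⟩ := h01
        have ha1 : iot (k₂ - 2*k₄) (g (s 0) + g (s 1) + k₂) = i₀ := ha1x
        have ha2 : iot (k₂ - 2*k₄) (g (s 1) + k₄) = i₀ := ha2x
        have hz0 : g (s 0) + (k₂ - k₄) ≠ 0 := hAx.1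
        have hz1 : g (s 1) + (k₂ - k₄) ≠ 0 := hAx.2.1
        have hdep01 : dep (g (s 0) + (k₂ - k₄)) = dep (g (s 1) + (k₂ - k₄)) := hAx.2.2.1
        have halp01 : alp (g (s 0) + (k₂ - k₄)) = alp (g (s 1) + (k₂ - k₄)) := hAx.2.2.2
        have hargsum : (g (s 0) + g (s 1) + k₂) + (k₂ - 2*k₄)
            = (g (s 0) + (k₂ - k₄)) + (g (s 1) + (k₂ - k₄)) := by ring
        have harg2 : (g (s 1) + k₄) + (k₂ - 2*k₄) = g (s 1) + (k₂ - k₄) := by ring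
        obtain ⟨hsne, hsdep, hsalp⟩ := dep_add_same hz0 hz1 hdep01.symm halp01.symm
        -- value computations
        have hv2 : iot (k₂ - 2*k₄) (g (s 1) + k₄) =
            colF (2 * dep (g (s 1) + (k₂ - k₄)) + 3) (alp (g (s 1) + (k₂ - k₄))) := by
          rw [iot, if_neg]
          · rw [harg2]
          · rw [harg2]; exact hz1
        have hv1 : iot (k₂ - 2*k₄) (g (s 0) + g (s 1) + k₂) =
            colF (2 * dep (g (s 0) + (k₂ - k₄)) + 3)
              ((2 * alp (g (s 0) + (k₂ - k₄))) % (2 * dep (g (s 0) + (k₂ - k₄)) + 3)) := by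
          rw [iot, if_neg]
          · rw [hargsum, hsdep, hsalp]
          · rw [hargsum]; exact hsne
        obtain ⟨hpos, hlt, -⟩ := alp_facts hz0
        have hcol := colF_ne (m := 2 * dep (g (s 0) + (k₂ - k₄)) + 3)
          (t := alp (g (s 0) + (k₂ - k₄))) (by omega) hpos hlt
        rw [← hv1] at hcol
        rw [hdep01, halp01] at hcol
        rw [← hv2] at hcol
        rw [ha1, ha2] at hcol
        exact hcol rfl
end

section
/- Let u be a nonprincipal ultrafilter on ℕ and let P, Q ∈ ℤ[X] be polynomials of degree at least 1. If the image of u under the map n ↦ P(n) equals the image of u under the map n ↦ Q(n) (as ultrafilters on ℤ, where P, Q are evaluated at the natural number n viewed as an integer), then P = Q. -/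
/-!
Join `P(n)` and `Q(n)` by an edge for every `n` with `P(n) ≠ Q(n)`. A polynomial of positive
degree takes each value at most `deg` times, so this graph on `ℤ` has bounded degree and hence a
finite proper colouring `C`. The ultrafilter `C(P(u)) = C(Q(u))` on the finite set of colours is
principal, so for `u`-many `n` the adjacent vertices `P(n)` and `Q(n)` get the same colour;
since `P ≠ Q` forces `P(n) ≠ Q(n)` for all but finitely many `n`, this is a contradiction.
-/

open Filter Polynomial

theorem SimpleGraph.colorable_of_forall_encard_neighborSet_le {V : Type*} (G : SimpleGraph V)
    {k : ℕ} (h : ∀ v, (G.neighborSet v).encard ≤ k) : G.Colorable (k + 1) := by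
  classical
  have exists_fresh : ∀ S : Set (Fin (k + 1)), S.encard ≤ k → ∃ i, i ∉ S := by
    intro S hS
    by_contra! hS_univ
    rw [Set.eq_univ_of_forall hS_univ, Set.encard_univ, ENat.card_eq_coe_fintype_card,
      Fintype.card_fin, Nat.cast_le] at hS
    omega
  -- greedy colouring along a well-order of `V`
  let r : V → V → Prop := WellOrderingRel
  have hr : IsWellOrder V r := WellOrderingRel.isWellOrder
  let usedColors (v : V) (c : ∀ w, r w v → Fin (k + 1)) : Set (Fin (k + 1)) :=
    (fun w => if hw : r w v then c w hw else 0) '' {w | r w v ∧ G.Adj v w}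
  have usedColors_encard_le : ∀ v c, (usedColors v c).encard ≤ k := fun v _ =>
    (Set.encard_image_le _ _).trans <| (Set.encard_le_encard fun _ hw => hw.2).trans (h v)
  let color : V → Fin (k + 1) := hr.wf.fix fun v c => Classical.epsilon (· ∉ usedColors v c)
  have color_notMem : ∀ v, color v ∉ usedColors v fun w _ => color w := fun v => by
    rw [show color v = _ from hr.wf.fix_eq _ v]
    exact Classical.epsilon_spec (exists_fresh _ (usedColors_encard_le _ _))
  have color_ne : ∀ v w, r w v → G.Adj v w → color v ≠ color w := fun v w hwv hvw hc =>
    color_notMem v ⟨w, ⟨hwv, hvw⟩, by simp [hwv, hc]⟩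
  refine ⟨.mk color fun {v w} hvw => ?_⟩
  rcases trichotomous_of r v w with hvw' | rfl | hwv
  · exact (color_ne w v hvw' hvw.symm).symm
  · exact (G.irrefl hvw).elim
  · exact color_ne v w hwv hvw

theorem Ultrafilter.map_ne_map_of_encard_preimage_le {α β : Type*} (u : Ultrafilter α)
    {f g : α → β} {k m : ℕ} (hf : ∀ b, (f ⁻¹' {b}).encard ≤ k)
    (hg : ∀ b, (g ⁻¹' {b}).encard ≤ m) (hfg : ∀ᶠ a in (u : Filter α), f a ≠ g a) :
    u.map f ≠ u.map g := by
  intro hmap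
  let G := SimpleGraph.fromRel fun x y => ∃ a, f a = x ∧ g a = y
  have hG : ∀ x, (G.neighborSet x).encard ≤ (k + m : ℕ) := by
    intro x
    have hsub : G.neighborSet x ⊆ g '' (f ⁻¹' {x}) ∪ f '' (g ⁻¹' {x}) := by
      rintro y ⟨-, ⟨a, rfl, rfl⟩ | ⟨a, rfl, rfl⟩⟩
      · exact Or.inl ⟨a, rfl, rfl⟩
      · exact Or.inr ⟨a, rfl, rfl⟩
    calc (G.neighborSet x).encard
        ≤ (g '' (f ⁻¹' {x})).encard + (f '' (g ⁻¹' {x})).encard :=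
          (Set.encard_le_encard hsub).trans (Set.encard_union_le _ _)
      _ ≤ k + m := add_le_add ((Set.encard_image_le _ _).trans (hf x))
          ((Set.encard_image_le _ _).trans (hg x))
      _ = (k + m : ℕ) := by push_cast; rfl
  obtain ⟨C⟩ := G.colorable_of_forall_encard_neighborSet_le hG
  obtain ⟨i, hi⟩ := (u.map (C ∘ f)).eq_pure_of_finite
  have hfi : ∀ᶠ a in (u : Filter α), C (f a) = i :=
    show {i} ∈ u.map (C ∘ f) by rw [hi]; exact Set.mem_singleton i
  have hgi : ∀ᶠ a in (u : Filter α), C (g a) = i :=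
    show {i} ∈ u.map (C ∘ g) by
      rw [← Ultrafilter.map_map, ← hmap, Ultrafilter.map_map, hi]; exact Set.mem_singleton i
  obtain ⟨a, hfa, hga, hne⟩ := (hfi.and (hgi.and hfg)).exists
  exact C.valid (SimpleGraph.fromRel_adj _ _ _ |>.mpr ⟨hne, Or.inl ⟨a, rfl, rfl⟩⟩)
    (hfa.trans hga.symm)

theorem Polynomial.encard_setOf_eval_eq_le {R : Type*} [CommRing R] [IsDomain R] {p : R[X]}
    (hp : 0 < p.natDegree) (c : R) : {x | p.eval x = c}.encard ≤ p.natDegree := by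
  classical
  have hpc : p - C c ≠ 0 := fun h0 => by
    rw [sub_eq_zero.mp h0, natDegree_C] at hp
    exact hp.false
  have : {x | p.eval x = c} = ((p - C c).roots.toFinset : Set R) := by
    ext x
    simp [mem_roots hpc, sub_eq_zero]
  rw [this, Set.encard_coe_eq_coe_finsetCard, Nat.cast_le, ← natDegree_sub_C (a := c)]
  exact (Multiset.toFinset_card_le _).trans (card_roots' _)

theorem Polynomial.encard_setOf_eval_natCast_eq_le {R : Type*} [CommRing R] [IsDomain R]
    [CharZero R] {p : R[X]} (hp : 0 < p.natDegree) (c : R) :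
    {n : ℕ | p.eval (n : R) = c}.encard ≤ p.natDegree := by
  rw [← (Nat.cast_injective (R := R)).encard_image]
  exact (Set.encard_le_encard (by rintro _ ⟨n, hn, rfl⟩; exact hn)).trans
    (encard_setOf_eval_eq_le hp c)

/-- If `u` is a nonprincipal ultrafilter on `ℕ` and `P, Q` are integer polynomials of
degree at least `1` with the same pushforward of `u`, then `P = Q`. -/
theorem stmt_9 (u : Ultrafilter ℕ) (hu : ∀ A : Set ℕ, A.Finite → A ∉ u)
    (P Q : Polynomial ℤ) (hP : 1 ≤ P.natDegree) (hQ : 1 ≤ Q.natDegree)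
    (h : (u.map fun n : ℕ => P.eval (n : ℤ)) = (u.map fun n : ℕ => Q.eval (n : ℤ))) :
    P = Q := by
  by_contra hPQ
  have hfin : {n : ℕ | P.eval (n : ℤ) = Q.eval (n : ℤ)}.Finite :=
    ((finite_setOfPred_isRoot (sub_ne_zero.mpr hPQ)).preimage Nat.cast_injective.injOn).subset
      fun n hn => by simpa [sub_eq_zero] using hn
  have hne : ∀ᶠ n : ℕ in (u : Filter ℕ), P.eval (n : ℤ) ≠ Q.eval (n : ℤ) :=
    u.compl_mem_iff_notMem.mpr (hu _ hfin)
  exact u.map_ne_map_of_encard_preimage_le (encard_setOf_eval_natCast_eq_le hP)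
    (encard_setOf_eval_natCast_eq_le hQ) hne h
end

section
/- Let a, b, c be positive integers with a = c and b ≠ c. Then: (1) for every finite colouring of the positive integers and every N ∈ ℕ there exist a colour class containing positive integers x, y, z with x > N·y and a·x + b·y = c·z; (2) there exist a finite colouring of the positive integers and N ∈ ℕ such that no colour class contains positive integers x, y, z with y > N·x and a·x + b·y = c·z. -/
/-!
(1) Since `a = c`, the triple `x`, `y = a d`, `z = x + b d` solves the equation, so it suffices
that `a d` and a long progression `m + d, …, m + L d` get one colour (a Brauer configuration),
and then to take `x` far along the progression. Such configurations exist by colour focusing: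
find a monochromatic progression with the finite van der Waerden theorem; either some `a j k`
with `k` its difference shares its colour, or the dilated colouring `j ↦ col (a j k)` misses that
colour and induction on the number of colours applies.

(2) If `y > N x` for large `N`, then `y / z` (when `b < a`) or `z / y` (when `b > a`) lies in a
fixed interval `[ρ, B]` with `ρ > 1`. Colouring `n` by `⌊m log₂ n⌋ mod M`, with `ρ ^ m ≥ 2` and
`M` larger than `m log₂ B + 1`, gives no such pair one colour.
-/

open Finset Combinatorics

theorem exists_mono_arithProg_bounded (κ : Type*) [Finite κ] (K : ℕ) :
    ∃ W, ∀ col : ℕ → κ, ∃ k > 0, ∃ m c, m + k * K ≤ W ∧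
      ∀ s ∈ Icc 1 K, col (m + k * s) = c := by
  classical
  obtain ⟨ι, _, hι⟩ := Line.exists_mono_in_high_dimension (Fin K) κ
  refine ⟨Fintype.card ι * K, fun col => ?_⟩
  -- the sum map sends a combinatorial line to a progression whose difference is the number of
  -- moving coordinates; each fixed coordinate contributes a constant in `[1, K]`
  obtain ⟨l, c, hl⟩ := hι fun v => col (∑ i, ((v i : ℕ) + 1))
  set S : Finset ι := {i | l.idxFun i = none}
  let fixed (i : ι) : ℕ := ((l.idxFun i).map fun a => (a : ℕ) + 1).getD 0
  have hfixed : ∀ i, fixed i ≤ K := by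
    intro i
    rcases h : l.idxFun i with _ | a <;> simp [fixed, h]
  have hsum : ∀ x : Fin K, ∑ i, ((l x i : ℕ) + 1) = ∑ i ∈ Sᶜ, fixed i + #S * (x + 1) := by
    intro x
    rw [← sum_add_sum_compl S, add_comm, ← smul_eq_mul, ← sum_const]
    congr 1
    · refine sum_congr rfl fun i hi => ?_
      obtain ⟨a, ha⟩ := Option.ne_none_iff_exists'.mp (by simpa [S] using hi)
      simp [fixed, ha]
    · refine sum_congr rfl fun i hi => ?_
      rw [Line.apply_none _ _ _ (by simpa [S] using hi)]
  refine ⟨#S, card_pos.mpr ⟨l.proper.choose, by simpa [S] using l.proper.choose_spec⟩,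
    ∑ i ∈ Sᶜ, fixed i, c, ?_, fun s hs => ?_⟩
  · calc ∑ i ∈ Sᶜ, fixed i + #S * K ≤ ∑ i ∈ Sᶜ, K + ∑ i ∈ S, K := by
          rw [sum_const (b := K) (s := S), smul_eq_mul]
          gcongr with i
          exact hfixed i
      _ = Fintype.card ι * K := by
          rw [add_comm, sum_add_sum_compl, sum_const, smul_eq_mul, card_univ]
  · obtain ⟨hs1, hsK⟩ := mem_Icc.mp hs
    have := hsum ⟨s - 1, by omega⟩
    rw [Nat.sub_add_cancel hs1] at this
    rw [← this]
    exact hl _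

def HasMonoBrauerConfig {κ : Type*} (col : ℕ → κ) (q L : ℕ) : Prop :=
  ∃ d > 0, ∃ m, ∀ s ∈ Icc 1 L, col (m + s * d) = col (q * d)

theorem exists_bound_hasMonoBrauerConfig (κ : Type*) [Finite κ] (q L : ℕ) (hq : 0 < q) (n : ℕ) :
    ∃ M, ∀ (I : Finset κ), #I ≤ n → ∀ col : ℕ → κ, Set.MapsTo col (Set.Icc 1 M) I →
      HasMonoBrauerConfig col q L := by
  classical
  induction n with
  | zero =>
    refine ⟨1, fun I hI col hcol => ?_⟩
    have := hcol (Set.left_mem_Icc.mpr le_rfl)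
    simp_all
  | succ n ih =>
    obtain ⟨M, hM⟩ := ih
    obtain ⟨W, hW⟩ := exists_mono_arithProg_bounded κ (L * M + 1)
    refine ⟨(q * M + 1) * W, fun I hI col hcol => ?_⟩
    obtain ⟨k, hk, a, c, haW, hmono⟩ := hW col
    have hakW : a + k ≤ W :=
      (Nat.add_le_add_left (Nat.le_mul_of_pos_right k (Nat.succ_pos _)) a).trans haW
    have hWM : W ≤ (q * M + 1) * W := Nat.le_mul_of_pos_left W (Nat.succ_pos _)
    have hcI : c ∈ I := by
      rw [← hmono 1 (by simp), mul_one]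
      exact hcol ⟨by omega, by omega⟩
    by_cases hfocus : ∃ j ∈ Icc 1 M, col (q * (j * k)) = c
    · obtain ⟨j, hj, hjc⟩ := hfocus
      obtain ⟨hj1, hjM⟩ := mem_Icc.mp hj
      refine ⟨j * k, by positivity, a, fun s hs => ?_⟩
      obtain ⟨hs1, hsL⟩ := mem_Icc.mp hs
      rw [hjc, ← hmono (s * j) (mem_Icc.mpr ⟨by nlinarith, by nlinarith⟩)]
      ring_nf
    · push Not at hfocus
      have hmaps : Set.MapsTo (fun j => col (q * (j * k))) (Set.Icc 1 M) (I.erase c) := by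
        rintro j ⟨hj1, hjM⟩
        simp only [coe_erase, Set.mem_sdiff, mem_coe, Set.mem_singleton_iff]
        refine ⟨hcol ⟨Nat.one_le_iff_ne_zero.mpr (by positivity), ?_⟩,
          hfocus j (mem_Icc.mpr ⟨hj1, hjM⟩)⟩
        calc q * (j * k) ≤ q * (M * W) := by gcongr; omega
          _ ≤ (q * M + 1) * W := by nlinarith
      obtain ⟨d, hd, m, hdm⟩ := hM (I.erase c) (by rw [card_erase_of_mem hcI]; omega) _ hmaps
      refine ⟨q * (d * k), by positivity, q * (m * k), fun s hs => ?_⟩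
      convert hdm s hs using 2 <;> ring

theorem hasMonoBrauerConfig_of_finite {κ : Type*} [Finite κ] (q L : ℕ) (hq : 0 < q) (col : ℕ → κ) :
    HasMonoBrauerConfig col q L := by
  cases nonempty_fintype κ
  obtain ⟨M, hM⟩ := exists_bound_hasMonoBrauerConfig κ q L hq (Fintype.card κ)
  exact hM univ le_rfl col fun _ _ => mem_coe.mpr (mem_univ _)

theorem exists_two_mul_pow_lt_pow {p q : ℕ} (hpq : p < q) : ∃ m, 2 * p ^ m < q ^ m := by
  rcases Nat.eq_zero_or_pos p with rfl | hp
  · exact ⟨1, by simpa using hpq⟩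
  have hp' : (0 : ℚ) < p := by exact_mod_cast hp
  obtain ⟨m, hm⟩ := pow_unbounded_of_one_lt (2 : ℚ)
    ((one_lt_div hp').mpr (by exact_mod_cast hpq : (p : ℚ) < q))
  refine ⟨m, ?_⟩
  rw [div_pow, lt_div_iff₀ (pow_pos hp' m)] at hm
  exact_mod_cast hm

theorem exists_coloring_forall_mono_ratio_lt {p q : ℕ} (hpq : p < q) (B : ℕ) :
    ∃ r, ∃ col : ℕ → Fin r, ∀ u v, 0 < u → col u = col v → q * u ≤ p * v → B * u < v := by
  obtain ⟨m, hm⟩ := exists_two_mul_pow_lt_pow hpq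
  -- `Nat.log 2 (n ^ m) = ⌊m log₂ n⌋` increases from `u` to `v` by at least one and at most `E`
  set E := Nat.log 2 (B ^ m) + 1
  refine ⟨E + 1, fun n => ⟨Nat.log 2 (n ^ m) % (E + 1), Nat.mod_lt _ (Nat.succ_pos _)⟩,
    fun u v hu hcol huv => ?_⟩
  by_contra! hvB
  have hp : 0 < p := Nat.pos_of_ne_zero fun hp => by simp [hp] at huv; omega
  have hv : 0 < v := Nat.pos_of_ne_zero fun hv => by simp [hv] at huv; omega
  have hdouble : 2 * u ^ m ≤ v ^ m := by
    refine Nat.le_of_mul_le_mul_left ?_ (pow_pos hp m)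
    calc p ^ m * (2 * u ^ m) ≤ q ^ m * u ^ m := by
          rw [← mul_assoc, mul_comm _ 2]; gcongr
      _ = (q * u) ^ m := (mul_pow ..).symm
      _ ≤ (p * v) ^ m := by gcongr
      _ = p ^ m * v ^ m := mul_pow ..
  have hlow : Nat.log 2 (u ^ m) < Nat.log 2 (v ^ m) := by
    refine (Nat.le_log_iff_pow_le one_lt_two (pow_pos hv m).ne').mpr ?_
    calc 2 ^ (Nat.log 2 (u ^ m) + 1) = 2 * 2 ^ Nat.log 2 (u ^ m) := by ring
      _ ≤ 2 * u ^ m := Nat.mul_le_mul_left 2 (Nat.pow_log_le_self 2 (pow_pos hu m).ne')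
      _ ≤ v ^ m := hdouble
  have hup : Nat.log 2 (v ^ m) < E + (Nat.log 2 (u ^ m) + 1) := by
    refine Nat.log_lt_of_lt_pow (pow_pos hv m).ne' ?_
    calc v ^ m ≤ (B * u) ^ m := by gcongr
      _ = B ^ m * u ^ m := mul_pow ..
      _ < 2 ^ E * 2 ^ (Nat.log 2 (u ^ m) + 1) :=
        Nat.mul_lt_mul_of_lt_of_lt (Nat.lt_pow_succ_log_self one_lt_two _)
          (Nat.lt_pow_succ_log_self one_lt_two _)
      _ = 2 ^ (E + (Nat.log 2 (u ^ m) + 1)) := (pow_add ..).symm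
  have hdvd : E + 1 ∣ Nat.log 2 (v ^ m) - Nat.log 2 (u ^ m) :=
    (Nat.modEq_iff_dvd' hlow.le).mp (congrArg Fin.val hcol)
  have := Nat.le_of_dvd (by omega) hdvd
  omega

theorem stmt_10_general (a b c : ℕ) (ha : 0 < a) (hb : 0 < b)
    (hac : a = c) (hbc : b ≠ c) :
    (∀ r : ℕ, ∀ col : ℕ → Fin r, ∀ N : ℕ,
      ∃ x y z : ℕ, 0 < x ∧ 0 < y ∧ 0 < z ∧
        col x = col y ∧ col y = col z ∧ x > N * y ∧ a * x + b * y = c * z) ∧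
    (∃ r : ℕ, ∃ col : ℕ → Fin r, ∃ N : ℕ,
      ¬ ∃ x y z : ℕ, 0 < x ∧ 0 < y ∧ 0 < z ∧
        col x = col y ∧ col y = col z ∧ y > N * x ∧ a * x + b * y = c * z) := by
  subst hac
  refine ⟨fun r col N => ?_, ?_⟩
  · obtain ⟨d, hd, m, hmono⟩ := hasMonoBrauerConfig_of_finite a (N * a + b + 1) ha col
    refine ⟨m + (N * a + 1) * d, a * d, m + (N * a + 1 + b) * d, by positivity, by positivity,
      by positivity, hmono _ (mem_Icc.mpr ⟨by omega, by omega⟩),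
      (hmono _ (mem_Icc.mpr ⟨by omega, by omega⟩)).symm, by nlinarith, by ring⟩
  · rcases lt_or_gt_of_ne hbc with hba | hab
    · obtain ⟨r, col, hcol⟩ := exists_coloring_forall_mono_ratio_lt (lt_add_one (2 * a)) a
      refine ⟨r, col, 2 * a + 1, ?_⟩
      rintro ⟨x, y, z, hx, hy, hz, hxy, hyz, hyx, heq⟩
      have hzy : a * ((2 * a + 1) * z) ≤ a * (2 * a * y) := by
        have h1 : (2 * a + 1) * x * a < y * a := Nat.mul_lt_mul_of_pos_right hyx ha
        have h2 : (b + 1) * ((2 * a + 1) * y) ≤ a * ((2 * a + 1) * y) :=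
          Nat.mul_le_mul_right _ hba
        have h3 : (2 * a + 1) * (a * x + b * y) = (2 * a + 1) * (a * z) := by rw [heq]
        nlinarith
      have := hcol z y hz hyz.symm (Nat.le_of_mul_le_mul_left hzy ha)
      nlinarith
    · obtain ⟨r, col, hcol⟩ := exists_coloring_forall_mono_ratio_lt (lt_add_one a) (b + 1)
      refine ⟨r, col, a, ?_⟩
      rintro ⟨x, y, z, hx, hy, hz, hxy, hyz, hyx, heq⟩
      have := hcol y z hy hyz (by nlinarith)
      nlinarith

/-- For the Rado equation `a·x + b·y = c·z` with `a = c ≠ b`: monochromatic solutions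
with `x > N·y` always exist, but some finite colouring admits no monochromatic solution
with `y > N·x` for a suitable `N`. -/
theorem stmt_10 (a b c : ℕ) (ha : 0 < a) (hb : 0 < b) (hc : 0 < c)
    (hac : a = c) (hbc : b ≠ c) :
    (∀ r : ℕ, ∀ col : ℕ → Fin r, ∀ N : ℕ,
      ∃ x y z : ℕ, 0 < x ∧ 0 < y ∧ 0 < z ∧
        col x = col y ∧ col y = col z ∧ x > N * y ∧ a * x + b * y = c * z) ∧
    (∃ r : ℕ, ∃ col : ℕ → Fin r, ∃ N : ℕ,
      ¬ ∃ x y z : ℕ, 0 < x ∧ 0 < y ∧ 0 < z ∧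
        col x = col y ∧ col y = col z ∧ y > N * x ∧ a * x + b * y = c * z) :=
  stmt_10_general a b c ha hb hac hbc
end

section
/- Let P, Q ∈ ℤ[X] be nonzero polynomials with P(0) = Q(0) = 0 and let f : ℕ → ℤ be any function. Suppose the relation φ(x, y, z) := (f(x) + P(y) = Q(z) and f(x) ≠ 0), where P, Q are evaluated at positive integers cast into ℤ, is Ramsey partition regular in (x,y),z over the positive integers. Then P = Q and deg P = 1. -/
/-!
Fix a colouring. The Ramsey property yields some `x`, and infinitely many `y` of one colour each
having a `z` of the same colour with `Q(z) = P(y) + c`, where `c = f(x) ≠ 0`. If `g(z) - g(y)`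
tends along these solutions to a constant `t ≠ 0` that does not depend on `c`, colouring `n` by
`⌊2g(n)/|t|⌋ mod 4` separates `y` from `z`, whose floors eventually differ by `1`, `2` or `3`.

With `p, q` the degrees and `a, b` the leading coefficients, `q log z - p log y → log |a/b|`, and
`a, b` have the same sign because `P(y)` and `Q(z)` eventually have the signs of `a` and `b`.
So `g = log ∘ log` refutes `p ≠ q`, and then `g = log` refutes `a ≠ b`. If the common degree `d`
is at least `2`, then `Q(y + κ ± ε) - P(y) - c` has degree `d - 1` and leading coefficient
`± d b ε`, so the monotonicity of `Q` traps `z - y` near `κ`, which does not depend on `c`.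
Then `g = id` refutes `κ ≠ 0`, while `κ = 0` forces `z = y`, so that `Q - P - c`, which takes the
value `-c` at `0`, has infinitely many roots. Hence `d = 1`, and `P(0) = Q(0) = 0` gives `P = Q`.
-/

/-- A ternary relation `φ` on the positive integers is Ramsey partition regular in
`(x,y),z` if for every finite colouring of the positive integers there are a colour
class `C` and an infinite `H ⊆ C` such that for all `h₁ < h₂` in `H` there is `z ∈ C`
with `φ h₁ h₂ z`. -/
def RamseyPR (φ : ℕ → ℕ → ℕ → Prop) : Prop :=
  ∀ r : ℕ, ∀ col : ℕ → Fin r, ∃ j : Fin r, ∃ H : Set ℕ,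
    H.Infinite ∧ (∀ h ∈ H, 0 < h ∧ col h = j) ∧
    ∀ h₁ ∈ H, ∀ h₂ ∈ H, h₁ < h₂ → ∃ z : ℕ, (0 < z ∧ col z = j) ∧ φ h₁ h₂ z

open Filter Topology Polynomial

def solutionFilter (φ : ℕ → ℕ → ℕ → Prop) (x : ℕ) : Filter (ℕ × ℕ) :=
  comap Prod.fst atTop ⊓ 𝓟 {p | φ x p.1 p.2}

section Combinatorics

variable {φ : ℕ → ℕ → ℕ → Prop} {x : ℕ}

theorem eventually_solutionFilter_iff {S : ℕ × ℕ → Prop} :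
    (∀ᶠ p in solutionFilter φ x, S p) ↔ ∀ᶠ y in atTop, ∀ z, φ x y z → S (y, z) := by
  simp only [solutionFilter, eventually_inf_principal, eventually_comap, Set.mem_ofPred_eq]
  refine eventually_congr (Eventually.of_forall fun y => ⟨fun h z => h (y, z) rfl, ?_⟩)
  rintro h ⟨y', z⟩ rfl
  exact h z

theorem tendsto_fst_solutionFilter : Tendsto Prod.fst (solutionFilter φ x) atTop :=
  tendsto_comap.mono_left inf_le_left

theorem eventually_mem_solutionFilter : ∀ᶠ p in solutionFilter φ x, φ x p.1 p.2 :=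
  mem_inf_of_right (mem_principal_self _)

theorem RamseyPR.exists_frequently_monochromatic (h : RamseyPR φ) {α : Type*} [Finite α]
    (col : ℕ → α) : ∃ x, ∃ᶠ y in atTop, ∃ z, col y = col x ∧ col z = col x ∧ φ x y z := by
  obtain ⟨r, ⟨e⟩⟩ := Finite.exists_equiv_fin α
  obtain ⟨j, H, hH, hcol, hsol⟩ := h r (e ∘ col)
  obtain ⟨x, hx⟩ := hH.nonempty
  have hcol' : ∀ n, e (col n) = j → col n = col x := fun n hn =>
    e.injective (hn.trans (hcol x hx).2.symm)
  refine ⟨x, Nat.frequently_atTop_iff_infinite.mpr ((hH.sdiff (Set.finite_le_nat x)).mono ?_)⟩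
  rintro y ⟨hyH, hyx⟩
  obtain ⟨z, ⟨-, hz⟩, hφ⟩ := hsol x hx y hyH (not_le.mp hyx)
  exact ⟨z, hcol' y (hcol y hyH).2, hcol' z hz, hφ⟩

theorem RamseyPR.exists_neBot_solutionFilter (h : RamseyPR φ) :
    ∃ x, (solutionFilter φ x).NeBot := by
  obtain ⟨x, hx⟩ := h.exists_frequently_monochromatic fun _ => ()
  refine ⟨x, ⟨fun hbot => ?_⟩⟩
  have : ∀ᶠ p in solutionFilter φ x, False := hbot ▸ eventually_bot
  obtain ⟨y, ⟨z, -, -, hφ⟩, hy⟩ :=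
    (hx.and_eventually (eventually_solutionFilter_iff.mp this)).exists
  exact hy z hφ

theorem not_four_dvd_floor_sub_floor {u v : ℝ} (h : |u - v| ∈ Set.Ioo 1 3) :
    ¬ (4 : ℤ) ∣ ⌊u⌋ - ⌊v⌋ := by
  have hfloor : |((⌊u⌋ - ⌊v⌋ : ℤ) : ℝ) - (u - v)| < 1 := by
    rw [abs_sub_lt_iff]; push_cast
    constructor <;> linarith [Int.floor_le u, Int.lt_floor_add_one u, Int.floor_le v,
      Int.lt_floor_add_one v]
  have hm : 0 < |⌊u⌋ - ⌊v⌋| ∧ |⌊u⌋ - ⌊v⌋| < 4 := by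
    have := abs_sub_abs_le_abs_sub ((⌊u⌋ - ⌊v⌋ : ℤ) : ℝ) (u - v)
    have := abs_sub_abs_le_abs_sub (u - v) ((⌊u⌋ - ⌊v⌋ : ℤ) : ℝ)
    have := abs_sub_comm ((⌊u⌋ - ⌊v⌋ : ℤ) : ℝ) (u - v)
    exact_mod_cast (⟨by linarith [h.1], by linarith [h.2]⟩ :
      0 < |((⌊u⌋ - ⌊v⌋ : ℤ) : ℝ)| ∧ |((⌊u⌋ - ⌊v⌋ : ℤ) : ℝ)| < 4)
  rintro ⟨k, hk⟩
  rw [hk] at hm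
  rcases abs_cases (4 * k) with ⟨h4, -⟩ | ⟨h4, -⟩ <;> omega

theorem RamseyPR.false_of_tendsto_sub (h : RamseyPR φ) (g : ℕ → ℝ) {t : ℝ} (ht : t ≠ 0)
    (hg : ∀ x, Tendsto (fun p : ℕ × ℕ => g p.2 - g p.1) (solutionFilter φ x) (𝓝 t)) : False := by
  set u : ℕ → ℝ := fun n => 2 * g n / |t|
  obtain ⟨x, hfreq⟩ := h.exists_frequently_monochromatic fun n => (⌊u n⌋ : ZMod 4)
  have hlim : Tendsto (fun p : ℕ × ℕ => |u p.2 - u p.1|) (solutionFilter φ x) (𝓝 2) := by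
    have h2 : |2 / |t| * t| = 2 := by
      rw [abs_mul, abs_div, abs_abs, abs_two, div_mul_cancel₀ _ (abs_ne_zero.mpr ht)]
    refine h2 ▸ (((hg x).const_mul (2 / |t|)).abs.congr fun p => ?_)
    simp only [u]; ring_nf
  obtain ⟨y, ⟨z, hy, hz, hφ⟩, hyz⟩ := (hfreq.and_eventually (eventually_solutionFilter_iff.mp
    (hlim.eventually (Ioo_mem_nhds one_lt_two (by norm_num : (2:ℝ) < 3))))).exists
  exact not_four_dvd_floor_sub_floor (hyz z hφ)
    (by exact_mod_cast (ZMod.intCast_eq_intCast_iff_dvd_sub _ _ 4).mp (hy.trans hz.symm))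

end Combinatorics

namespace Polynomial

theorem tendsto_log_eval_sub_natDegree_mul_log (F : ℝ[X]) (hF : F ≠ 0) :
    Tendsto (fun x => Real.log (F.eval x) - F.natDegree * Real.log x) atTop
      (𝓝 (Real.log F.leadingCoeff)) := by
  have hlc : F.leadingCoeff ≠ 0 := leadingCoeff_ne_zero.mpr hF
  have hratio : Tendsto (fun x => F.eval x / (F.leadingCoeff * x ^ F.natDegree)) atTop (𝓝 1) :=
    (Asymptotics.isEquivalent_iff_tendsto_one ((eventually_gt_atTop 0).mono fun x hx =>
      mul_ne_zero hlc (pow_ne_zero _ hx.ne'))).mp F.isEquivalent_atTop_lead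
  have hlog := ((Real.continuousAt_log one_ne_zero).tendsto.comp hratio).add_const
    (Real.log F.leadingCoeff)
  rw [Real.log_one, zero_add] at hlog
  refine hlog.congr' ?_
  filter_upwards [F.eventually_atTop_not_isRoot hF, eventually_gt_atTop 0] with x hx hx0
  rw [Function.comp_apply, Real.log_div hx (mul_ne_zero hlc (pow_ne_zero _ hx0.ne')),
    Real.log_mul hlc (pow_ne_zero _ hx0.ne'), Real.log_pow]
  ring

theorem leadingCoeff_add_C {R : Type*} [Semiring R] {p : R[X]} (hp : 0 < p.degree) (a : R) :
    (p + C a).leadingCoeff = p.leadingCoeff :=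
  leadingCoeff_add_of_degree_lt' (degree_C_le.trans_lt hp)

theorem eventually_pos_leadingCoeff_mul_eval (F : ℝ[X]) (hF : F ≠ 0) :
    ∀ᶠ x in atTop, 0 < F.leadingCoeff * F.eval x := by
  have hlc : F.leadingCoeff ≠ 0 := leadingCoeff_ne_zero.mpr hF
  rcases Nat.eq_zero_or_pos F.natDegree with h0 | hpos
  · have hF' : ∀ x, F.eval x = F.leadingCoeff := fun x => by
      conv_lhs => rw [eq_C_of_natDegree_eq_zero h0]
      rw [eval_C, leadingCoeff, h0]
    exact Eventually.of_forall fun x => by rw [hF']; exact mul_self_pos.mpr hlc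
  have hdeg := natDegree_pos_iff_degree_pos.mp hpos
  rcases hlc.lt_or_gt with hneg | hpos
  · filter_upwards [(F.tendsto_atBot_of_leadingCoeff_nonpos hdeg hneg.le).eventually_lt_atBot 0]
      with x hx using mul_pos_of_neg_of_neg hneg hx
  · filter_upwards [(F.tendsto_atTop_of_leadingCoeff_nonneg hdeg hpos.le).eventually_gt_atTop 0]
      with x hx using mul_pos hpos hx

theorem exists_strictMonoOn_leadingCoeff_mul_eval (F : ℝ[X]) (hF : 0 < F.degree) :
    ∃ X₀, StrictMonoOn (fun x => F.leadingCoeff * F.eval x) (Set.Ici X₀) := by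
  have hd : (0 : ℝ) < F.natDegree := by exact_mod_cast natDegree_pos_iff_degree_pos.mpr hF
  have hF' : F.derivative ≠ 0 := by
    rw [← leadingCoeff_ne_zero, leadingCoeff_derivative]
    exact mul_ne_zero (leadingCoeff_ne_zero.mpr (ne_zero_of_degree_gt hF)) hd.ne'
  obtain ⟨X₀, hX₀⟩ := eventually_atTop.mp (F.derivative.eventually_pos_leadingCoeff_mul_eval hF')
  refine ⟨X₀, strictMonoOn_of_deriv_pos (convex_Ici X₀) (by fun_prop) fun x hx => ?_⟩
  rw [interior_Ici] at hx
  have := hX₀ x (le_of_lt hx)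
  rw [leadingCoeff_derivative] at this
  rw [deriv_const_mul _ (F.differentiableAt), Polynomial.deriv]
  nlinarith

theorem coeff_taylor_natDegree_sub_one {R : Type*} [CommSemiring R] (F : R[X])
    (hF : 0 < F.natDegree) (t : R) :
    (taylor t F).coeff (F.natDegree - 1) =
      F.coeff (F.natDegree - 1) + F.natDegree * F.leadingCoeff * t := by
  have hH : (hasseDeriv (F.natDegree - 1) F).natDegree < 2 := by
    have := natDegree_hasseDeriv_le F (F.natDegree - 1)
    omega
  rw [taylor_coeff, eval_eq_sum_range' hH, Finset.sum_range_succ, Finset.sum_range_one,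
    hasseDeriv_coeff, hasseDeriv_coeff, zero_add, Nat.choose_self,
    show 1 + (F.natDegree - 1) = F.natDegree by omega,
    Nat.choose_symm_of_eq_add (show F.natDegree = F.natDegree - 1 + 1 by omega),
    Nat.choose_one_right]
  simp only [leadingCoeff, Nat.cast_one, one_mul, pow_zero, mul_one, pow_one]

/-- The coefficient of `x ^ (d - 1)` in `Q (x + κ) - P x` vanishes for `κ = shiftLimit P Q`,
where `d = Q.natDegree`. -/
noncomputable def shiftLimit (P Q : ℝ[X]) : ℝ :=
  (P.coeff (Q.natDegree - 1) - Q.coeff (Q.natDegree - 1)) / (Q.natDegree * Q.leadingCoeff)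

theorem shiftLimit_add_C (P Q : ℝ[X]) (c : ℝ) (hQ : 1 < Q.natDegree) :
    shiftLimit (P + C c) Q = shiftLimit P Q := by
  rw [shiftLimit, shiftLimit, coeff_add, coeff_C_of_ne_zero (by omega), add_zero]

theorem eventually_pos_mul_eval_add_sub_eval {P Q : ℝ[X]} (hQ : 0 < Q.degree)
    (hdeg : P.natDegree = Q.natDegree) (hlc : P.leadingCoeff = Q.leadingCoeff) {s : ℝ}
    (hs : s ≠ shiftLimit P Q) :
    ∀ᶠ x in atTop, 0 < (s - shiftLimit P Q) * (Q.leadingCoeff * (Q.eval (x + s) - P.eval x)) := by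
  have hd : 0 < Q.natDegree := natDegree_pos_iff_degree_pos.mpr hQ
  have hd' : (0 : ℝ) < Q.natDegree := by exact_mod_cast hd
  have hb : Q.leadingCoeff ≠ 0 := leadingCoeff_ne_zero.mpr (ne_zero_of_degree_gt hQ)
  have hdb : (Q.natDegree : ℝ) * Q.leadingCoeff ≠ 0 := mul_ne_zero hd'.ne' hb
  set D := taylor s Q - P
  have hcoeff : D.coeff (Q.natDegree - 1) =
      Q.natDegree * Q.leadingCoeff * (s - shiftLimit P Q) := by
    rw [coeff_sub, coeff_taylor_natDegree_sub_one Q hd, shiftLimit]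
    field_simp
    ring
  have hcoeff0 : D.coeff (Q.natDegree - 1) ≠ 0 := hcoeff ▸ mul_ne_zero hdb (sub_ne_zero.mpr hs)
  have hle : D.natDegree ≤ Q.natDegree - 1 := by
    refine natDegree_le_pred
      ((natDegree_sub_le _ _).trans (max_le (natDegree_taylor Q s).le hdeg.le)) ?_
    rw [coeff_sub, ← natDegree_taylor Q s, ← leadingCoeff, leadingCoeff_taylor, natDegree_taylor,
      ← hdeg, ← leadingCoeff, hlc, sub_self]
  have hlcD : D.leadingCoeff = Q.natDegree * Q.leadingCoeff * (s - shiftLimit P Q) := by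
    rw [leadingCoeff, le_antisymm hle (le_natDegree_of_ne_zero hcoeff0), hcoeff]
  filter_upwards [D.eventually_pos_leadingCoeff_mul_eval (fun h => hcoeff0 (by simp [h]))]
    with x hx
  rw [hlcD, eval_sub, taylor_eval] at hx
  nlinarith

end Polynomial

section SolutionAsymptotics

variable {l : Filter (ℕ × ℕ)} {P Q : ℝ[X]}

theorem tendsto_snd_of_eval_eq (hP : 0 < P.degree) (hy : Tendsto Prod.fst l atTop)
    (hsol : ∀ᶠ p in l, Q.eval (p.2 : ℝ) = P.eval (p.1 : ℝ)) : Tendsto Prod.snd l atTop := by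
  have hQ : Tendsto (fun p : ℕ × ℕ => |Q.eval (p.2 : ℝ)|) l atTop :=
    ((P.abs_tendsto_atTop hP).comp ((tendsto_natCast_atTop_atTop (R := ℝ)).comp hy)).congr'
      (hsol.mono fun p hp => by simp [hp])
  rw [tendsto_atTop]
  intro N
  obtain ⟨M, hM⟩ := ((Set.finite_lt_nat N).image fun n : ℕ => |Q.eval (n : ℝ)|).bddAbove
  filter_upwards [hQ.eventually_gt_atTop M] with p hp
  by_contra hlt
  exact hp.not_ge (hM ⟨p.2, not_le.mp hlt, rfl⟩)

theorem tendsto_natDegree_mul_log_sub (hP : 0 < P.degree) (hQ : Q ≠ 0)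
    (hy : Tendsto Prod.fst l atTop) (hsol : ∀ᶠ p in l, Q.eval (p.2 : ℝ) = P.eval (p.1 : ℝ)) :
    Tendsto (fun p : ℕ × ℕ => Q.natDegree * Real.log p.2 - P.natDegree * Real.log p.1) l
      (𝓝 (Real.log P.leadingCoeff - Real.log Q.leadingCoeff)) := by
  have hz := tendsto_snd_of_eval_eq hP hy hsol
  have hPlog := (P.tendsto_log_eval_sub_natDegree_mul_log (ne_zero_of_degree_gt hP)).comp
    ((tendsto_natCast_atTop_atTop (R := ℝ)).comp hy)
  have hQlog := (Q.tendsto_log_eval_sub_natDegree_mul_log hQ).comp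
    ((tendsto_natCast_atTop_atTop (R := ℝ)).comp hz)
  refine (hPlog.sub hQlog).congr' (hsol.mono fun p hp => ?_)
  simp only [Function.comp_apply, hp]
  ring

theorem tendsto_log_log_sub (hP : 0 < P.degree) (hQ : 0 < Q.degree)
    (hy : Tendsto Prod.fst l atTop) (hsol : ∀ᶠ p in l, Q.eval (p.2 : ℝ) = P.eval (p.1 : ℝ)) :
    Tendsto (fun p : ℕ × ℕ => Real.log (Real.log p.2) - Real.log (Real.log p.1)) l
      (𝓝 (Real.log (P.natDegree / Q.natDegree))) := by
  have hp : (0 : ℝ) < P.natDegree := by exact_mod_cast natDegree_pos_iff_degree_pos.mpr hP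
  have hq : (0 : ℝ) < Q.natDegree := by exact_mod_cast natDegree_pos_iff_degree_pos.mpr hQ
  have hlogy := Real.tendsto_log_atTop.comp ((tendsto_natCast_atTop_atTop (R := ℝ)).comp hy)
  have hlogz := Real.tendsto_log_atTop.comp
    ((tendsto_natCast_atTop_atTop (R := ℝ)).comp (tendsto_snd_of_eval_eq hP hy hsol))
  have hratio : Tendsto (fun p : ℕ × ℕ => Real.log p.2 / Real.log p.1) l
      (𝓝 (P.natDegree / Q.natDegree)) := by
    have h := (((tendsto_natDegree_mul_log_sub hP (ne_zero_of_degree_gt hQ) hy hsol).div_atTop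
      hlogy).add_const (P.natDegree : ℝ)).div_const (Q.natDegree : ℝ)
    rw [zero_add] at h
    refine h.congr' ((hlogy.eventually_gt_atTop 0).mono fun p hp => ?_)
    simp only [Function.comp_apply] at hp ⊢
    field_simp
    ring
  refine ((Real.continuousAt_log (by positivity)).tendsto.comp hratio).congr' ?_
  filter_upwards [hlogy.eventually_gt_atTop 0, hlogz.eventually_gt_atTop 0] with p hy hz
  exact Real.log_div hz.ne' hy.ne'

theorem leadingCoeff_mul_leadingCoeff_pos [l.NeBot] (hP : 0 < P.degree) (hQ : Q ≠ 0)
    (hy : Tendsto Prod.fst l atTop) (hsol : ∀ᶠ p in l, Q.eval (p.2 : ℝ) = P.eval (p.1 : ℝ)) :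
    0 < P.leadingCoeff * Q.leadingCoeff := by
  have hz := tendsto_snd_of_eval_eq hP hy hsol
  obtain ⟨p, hPy, hQz, hp⟩ :=
    ((((tendsto_natCast_atTop_atTop (R := ℝ)).comp hy).eventually
      (P.eventually_pos_leadingCoeff_mul_eval (ne_zero_of_degree_gt hP))).and
    ((((tendsto_natCast_atTop_atTop (R := ℝ)).comp hz).eventually
      (Q.eventually_pos_leadingCoeff_mul_eval hQ)).and hsol)).exists
  simp only [Function.comp_apply, hp] at hPy hQz
  nlinarith [mul_pos hPy hQz, sq_nonneg (P.eval (p.1 : ℝ))]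

theorem tendsto_snd_sub_fst (hQ : 0 < Q.degree) (hdeg : P.natDegree = Q.natDegree)
    (hlc : P.leadingCoeff = Q.leadingCoeff) (hy : Tendsto Prod.fst l atTop)
    (hsol : ∀ᶠ p in l, Q.eval (p.2 : ℝ) = P.eval (p.1 : ℝ)) :
    Tendsto (fun p : ℕ × ℕ => (p.2 : ℝ) - p.1) l (𝓝 (shiftLimit P Q)) := by
  have hP : 0 < P.degree := by
    rwa [← natDegree_pos_iff_degree_pos, hdeg, natDegree_pos_iff_degree_pos]
  obtain ⟨X₀, hmono⟩ := Q.exists_strictMonoOn_leadingCoeff_mul_eval hQ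
  have hyR := (tendsto_natCast_atTop_atTop (R := ℝ)).comp hy
  have hzR := (tendsto_natCast_atTop_atTop (R := ℝ)).comp (tendsto_snd_of_eval_eq hP hy hsol)
  have hside : ∀ s ≠ shiftLimit P Q, ∀ᶠ p in l, 0 < (s - shiftLimit P Q) * (p.1 + s - p.2) := by
    intro s hs
    filter_upwards [hyR.eventually (eventually_pos_mul_eval_add_sub_eval hQ hdeg hlc hs), hsol,
      hzR.eventually_ge_atTop X₀, (tendsto_atTop_add_const_right _ s hyR).eventually_ge_atTop X₀]
      with p h hp hz hys
    simp only [Function.comp_apply, ← hp] at h hz hys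
    rcases hs.lt_or_gt with hlt | hgt
    · have := (hmono.lt_iff_lt hys hz).mp (by nlinarith)
      nlinarith
    · have := (hmono.lt_iff_lt hz hys).mp (by nlinarith)
      nlinarith
  refine tendsto_order.mpr ⟨fun s hs => ?_, fun s hs => ?_⟩
  · filter_upwards [hside s hs.ne] with p hp
    nlinarith
  · filter_upwards [hside s hs.ne'] with p hp
    nlinarith

end SolutionAsymptotics

def polyRel (f : ℕ → ℤ) (P Q : ℤ[X]) (x y z : ℕ) : Prop :=
  f x + P.eval (y : ℤ) = Q.eval (z : ℤ) ∧ f x ≠ 0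

section PolyRel

variable {f : ℕ → ℤ} {P Q : ℤ[X]}

local notation "ℝ[" P "]" => Polynomial.map (Int.castRingHom ℝ) P

@[simp] theorem degree_map_intCast (P : ℤ[X]) : ℝ[P].degree = P.degree :=
  degree_map_eq_of_injective (Int.castRingHom ℝ).injective_int P

@[simp] theorem natDegree_map_intCast (P : ℤ[X]) : ℝ[P].natDegree = P.natDegree :=
  natDegree_map_eq_of_injective (Int.castRingHom ℝ).injective_int P

@[simp] theorem leadingCoeff_map_intCast (P : ℤ[X]) : ℝ[P].leadingCoeff = P.leadingCoeff :=
  leadingCoeff_map_of_injective (Int.castRingHom ℝ).injective_int P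

theorem degree_map_intCast_add_C (hP : 0 < P.degree) (c : ℝ) :
    (ℝ[P] + C c).degree = P.degree := by
  rw [degree_add_C (by simpa), degree_map_intCast]

theorem leadingCoeff_map_intCast_add_C (hP : 0 < P.degree) (c : ℝ) :
    (ℝ[P] + C c).leadingCoeff = P.leadingCoeff := by
  rw [leadingCoeff_add_C (by simpa), leadingCoeff_map_intCast]

theorem eventually_eval_map_eq (x : ℕ) :
    ∀ᶠ p in solutionFilter (polyRel f P Q) x,
      ℝ[Q].eval (p.2 : ℝ) = (ℝ[P] + C (f x : ℝ)).eval (p.1 : ℝ) := by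
  filter_upwards [eventually_mem_solutionFilter] with p hp
  have := congrArg (Int.cast : ℤ → ℝ) hp.1
  push_cast at this
  simp only [eval_add, eval_C, eval_natCast_map, eq_intCast]
  linarith

theorem RamseyPR.natDegree_eq (h : RamseyPR (polyRel f P Q)) (hP : 0 < P.degree)
    (hQ : 0 < Q.degree) : P.natDegree = Q.natDegree := by
  by_contra hne
  have hp : (0 : ℝ) < P.natDegree := by exact_mod_cast natDegree_pos_iff_degree_pos.mpr hP
  have hq : (0 : ℝ) < Q.natDegree := by exact_mod_cast natDegree_pos_iff_degree_pos.mpr hQ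
  have hlog : Real.log (P.natDegree / Q.natDegree) ≠ 0 := by
    refine Real.log_ne_zero_of_pos_of_ne_one (by positivity) ?_
    rwa [ne_eq, div_eq_one_iff_eq hq.ne', Nat.cast_inj]
  refine h.false_of_tendsto_sub (fun n => Real.log (Real.log n)) hlog fun x => ?_
  have := tendsto_log_log_sub (P := ℝ[P] + C (f x : ℝ)) (Q := ℝ[Q])
    (by rwa [degree_map_intCast_add_C hP]) (by simpa)
    tendsto_fst_solutionFilter (eventually_eval_map_eq x)
  simpa only [natDegree_add_C, natDegree_map_intCast] using this

theorem RamseyPR.leadingCoeff_eq (h : RamseyPR (polyRel f P Q)) (hP : 0 < P.degree)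
    (hQ : 0 < Q.degree) (hdeg : P.natDegree = Q.natDegree) :
    P.leadingCoeff = Q.leadingCoeff := by
  have hPx : ∀ x, 0 < (ℝ[P] + C (f x : ℝ)).degree := fun x => by
    rwa [degree_map_intCast_add_C hP]
  have hQ' : ℝ[Q] ≠ 0 := ne_zero_of_degree_gt (by simpa using hQ)
  have hab : (0 : ℝ) < P.leadingCoeff * Q.leadingCoeff := by
    obtain ⟨x, hx⟩ := h.exists_neBot_solutionFilter
    simpa only [leadingCoeff_map_intCast_add_C hP, leadingCoeff_map_intCast] using
      leadingCoeff_mul_leadingCoeff_pos (hPx x) hQ' tendsto_fst_solutionFilter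
        (eventually_eval_map_eq x)
  by_contra hne
  have hlog : Real.log P.leadingCoeff - Real.log Q.leadingCoeff ≠ 0 := by
    rw [sub_ne_zero, ← Real.log_abs, ← Real.log_abs (Q.leadingCoeff : ℝ)]
    intro heq
    rcases abs_eq_abs.mp (Real.log_injOn_pos (abs_pos.mpr (left_ne_zero_of_mul hab.ne'))
      (abs_pos.mpr (right_ne_zero_of_mul hab.ne')) heq) with h1 | h1
    · exact hne (by exact_mod_cast h1)
    · rw [h1, neg_mul] at hab
      nlinarith [mul_self_nonneg (Q.leadingCoeff : ℝ)]
  refine h.false_of_tendsto_sub (fun n => Q.natDegree * Real.log n) hlog fun x => ?_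
  have := tendsto_natDegree_mul_log_sub (hPx x) hQ' tendsto_fst_solutionFilter
    (eventually_eval_map_eq x)
  simpa only [natDegree_add_C, natDegree_map_intCast, leadingCoeff_map_intCast_add_C hP,
    leadingCoeff_map_intCast, hdeg] using this

theorem RamseyPR.exists_not_tendsto_snd_sub_fst_zero (h : RamseyPR (polyRel f P Q))
    (hP0 : P.eval 0 = 0) (hQ0 : Q.eval 0 = 0) :
    ∃ x, ¬ Tendsto (fun p : ℕ × ℕ => (p.2 : ℝ) - p.1) (solutionFilter (polyRel f P Q) x) (𝓝 0) := by
  obtain ⟨x, hx⟩ := h.exists_neBot_solutionFilter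
  refine ⟨x, fun hlim => ?_⟩
  obtain ⟨-, -, hfx⟩ := (eventually_mem_solutionFilter (φ := polyRel f P Q) (x := x)).exists
  have hR : Q - P - C (f x) ≠ 0 := fun h0 => hfx (by
    simpa [hP0, hQ0] using congrArg (eval 0) h0)
  have hroot : ∀ᶠ p in solutionFilter (polyRel f P Q) x, (Q - P - C (f x)).IsRoot (p.1 : ℤ) := by
    filter_upwards [hlim.eventually (Ioo_mem_nhds neg_one_lt_zero one_pos),
      eventually_mem_solutionFilter] with p ⟨h1, h2⟩ hφ
    have hzy : p.2 = p.1 := by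
      have h1' : -1 < (p.2 : ℤ) - p.1 := by exact_mod_cast h1
      have h2' : (p.2 : ℤ) - p.1 < 1 := by exact_mod_cast h2
      omega
    rw [hzy] at hφ
    simp only [IsRoot, eval_sub, eval_C]
    linarith [hφ.1]
  exact Nat.frequently_atTop_iff_infinite.mp
    (tendsto_fst_solutionFilter.frequently hroot.frequently)
    ((finite_setOfPred_isRoot hR).preimage Nat.cast_injective.injOn)

theorem RamseyPR.natDegree_le_one (h : RamseyPR (polyRel f P Q)) (hP0 : P.eval 0 = 0)
    (hQ0 : Q.eval 0 = 0) (hP : 0 < P.degree) (hdeg : P.natDegree = Q.natDegree)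
    (hlc : P.leadingCoeff = Q.leadingCoeff) : P.natDegree ≤ 1 := by
  by_contra! hd
  have hQ : 0 < Q.degree := natDegree_pos_iff_degree_pos.mp (by omega)
  have hlim : ∀ x, Tendsto (fun p : ℕ × ℕ => (p.2 : ℝ) - p.1)
      (solutionFilter (polyRel f P Q) x) (𝓝 (shiftLimit ℝ[P] ℝ[Q])) := fun x => by
    have := tendsto_snd_sub_fst (P := ℝ[P] + C (f x : ℝ)) (Q := ℝ[Q]) (by simpa)
      (by rw [natDegree_add_C, natDegree_map_intCast, natDegree_map_intCast, hdeg])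
      (by rw [leadingCoeff_map_intCast_add_C hP, leadingCoeff_map_intCast, hlc])
      tendsto_fst_solutionFilter (eventually_eval_map_eq x)
    rwa [shiftLimit_add_C _ _ _ (by simpa [← hdeg])] at this
  rcases eq_or_ne (shiftLimit ℝ[P] ℝ[Q]) 0 with hκ | hκ
  · obtain ⟨x, hx⟩ := h.exists_not_tendsto_snd_sub_fst_zero hP0 hQ0
    exact hx (hκ ▸ hlim x)
  · exact h.false_of_tendsto_sub (fun n => n) hκ hlim

end PolyRel

theorem Polynomial.eq_of_natDegree_eq_one {R : Type*} [Semiring R] {P Q : R[X]}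
    (hP : P.natDegree = 1) (hQ : Q.natDegree = 1) (hP0 : P.eval 0 = 0) (hQ0 : Q.eval 0 = 0)
    (hlc : P.leadingCoeff = Q.leadingCoeff) : P = Q := by
  ext (_ | _ | n)
  · rw [coeff_zero_eq_eval_zero, coeff_zero_eq_eval_zero, hP0, hQ0]
  · rwa [leadingCoeff, hP, leadingCoeff, hQ] at hlc
  · rw [coeff_eq_zero_of_natDegree_lt (by omega), coeff_eq_zero_of_natDegree_lt (by omega)]

theorem stmt_12 (P Q : Polynomial ℤ) (hP : P ≠ 0) (hQ : Q ≠ 0)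
    (hP0 : P.eval 0 = 0) (hQ0 : Q.eval 0 = 0) (f : ℕ → ℤ)
    (h : RamseyPR fun x y z => f x + P.eval (y : ℤ) = Q.eval (z : ℤ) ∧ f x ≠ 0) :
    P = Q ∧ P.natDegree = 1 := by
  have h' : RamseyPR (polyRel f P Q) := h
  have hPdeg : 0 < P.degree := degree_pos_of_root hP hP0
  have hQdeg : 0 < Q.degree := degree_pos_of_root hQ hQ0
  have hdeg := h'.natDegree_eq hPdeg hQdeg
  have hlc := h'.leadingCoeff_eq hPdeg hQdeg hdeg
  have hd1 : P.natDegree = 1 :=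
    (h'.natDegree_le_one hP0 hQ0 hPdeg hdeg hlc).antisymm (natDegree_pos_iff_degree_pos.mpr hPdeg)
  exact ⟨eq_of_natDegree_eq_one hd1 (hdeg ▸ hd1) hP0 hQ0 hlc, hd1⟩
end

section
/- (1) For every finite colouring of the positive integers there exist a colour class C and an infinite set H ⊆ C such that h₁ + h₂ ∈ C for all h₁, h₂ ∈ H with h₁ < h₂. (2) For every finite colouring of the positive integers there exist a colour class C and an infinite set H ⊆ C such that h₂ − h₁ ∈ C for all h₁, h₂ ∈ H with h₁ < h₂. (Equivalently, both x + y = z and −x + y = z are Ramsey partition regular in (x,y),z.) -/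
/-!
By Hindman's theorem some colour class of the positive integers contains all finite sums
`FS b` of a sequence `b` of positive integers. Sums of `b` over two disjoint blocks of indices
add up to a sum over their union, and partial sums `∑_{i ≤ k} b i` differ by sums over intervals,
so blocks of growing length give the sum set `H` and the partial sums give the difference set `H`.
-/

namespace Hindman

theorem FS_map_subset {M N : Type*} [AddSemigroup M] [AddSemigroup N] (f : M →ₙ+ N)
    (a : Stream' M) : FS (a.map f) ⊆ f '' FS a := by
  intro x hx
  generalize hb : a.map f = b at hx
  induction hx generalizing a with
  | head' b =>
    subst hb
    exact ⟨a.head, FS.head a, Stream'.head_map _ _⟩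
  | tail' b m _ ih =>
    subst hb
    obtain ⟨y, hy, rfl⟩ := ih a.tail (Stream'.tail_map _ _).symm
    exact ⟨y, FS.tail a _ hy, rfl⟩
  | cons' b m _ ih =>
    subst hb
    obtain ⟨y, hy, rfl⟩ := ih a.tail (Stream'.tail_map _ _).symm
    exact ⟨a.head + y, FS.cons a y hy, by rw [map_add, Stream'.head_map]⟩

end Hindman

open Hindman

theorem exists_colour_pos_stream_FS_subset {r : ℕ} (col : ℕ → Fin r) :
    ∃ j : Fin r, ∃ b : Stream' ℕ, (∀ i, 0 < b.get i) ∧ FS b ⊆ {x | 0 < x ∧ col x = j} := by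
  obtain ⟨_, ⟨j, rfl⟩, a, ha⟩ :=
    exists_FS_of_finite_cover (Set.range fun j : Fin r => {x : ℕ+ | col x = j})
      (Set.finite_range _) fun x _ => Set.mem_sUnion.2 ⟨_, ⟨col x, rfl⟩, rfl⟩
  refine ⟨j, a.map PNat.coeAddHom, fun i => by simp [Stream'.get_map], ?_⟩
  rintro _ hy
  obtain ⟨x, hx, rfl⟩ := FS_map_subset _ _ hy
  exact ⟨x.pos, ha hx⟩

theorem exists_infinite_pairwise_add_mem_FS {b : Stream' ℕ} (hb : ∀ i, 0 < b.get i) :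
    ∃ H : Set ℕ, H.Infinite ∧ H ⊆ FS b ∧ ∀ h₁ ∈ H, ∀ h₂ ∈ H, h₁ < h₂ → h₁ + h₂ ∈ FS b := by
  set block : ℕ → Finset ℕ := fun k => Finset.Ico (2 ^ k) (2 ^ (k + 1))
  set t : ℕ → ℕ := fun k => ∑ i ∈ block k, b.get i
  have block_nonempty (k : ℕ) : (block k).Nonempty :=
    Finset.nonempty_Ico.2 (Nat.pow_lt_pow_right one_lt_two k.lt_succ_self)
  have block_disjoint {i k : ℕ} (hik : i ≠ k) : Disjoint (block i) (block k) := by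
    rw [← Finset.disjoint_coe]
    have pow_mono : Monotone fun k : ℕ => 2 ^ k := pow_right_monotone one_le_two
    simpa [block] using pow_mono.pairwise_disjoint_on_Ico_succ hik
  have lt_t (k : ℕ) : k < t k := calc
    k < 2 ^ k := Nat.lt_two_pow_self
    _ = (block k).card • 1 := by simp [block, pow_succ]; omega
    _ ≤ t k := Finset.card_nsmul_le_sum _ _ _ fun i _ => hb i
  refine ⟨Set.range t, Set.infinite_of_forall_exists_gt fun k => ⟨t k, ⟨k, rfl⟩, lt_t k⟩, ?_, ?_⟩
  · rintro _ ⟨k, rfl⟩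
    exact FS.finsetSum b _ (block_nonempty k)
  · rintro _ ⟨i, rfl⟩ _ ⟨k, rfl⟩ hlt
    have hik : i ≠ k := fun h => hlt.ne (congrArg t h)
    rw [← Finset.sum_union (block_disjoint hik)]
    exact FS.finsetSum b _ ((block_nonempty i).mono Finset.subset_union_left)

theorem exists_infinite_pairwise_sub_mem_FS {b : Stream' ℕ} (hb : ∀ i, 0 < b.get i) :
    ∃ H : Set ℕ, H.Infinite ∧ H ⊆ FS b ∧ ∀ h₁ ∈ H, ∀ h₂ ∈ H, h₁ < h₂ → h₂ - h₁ ∈ FS b := by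
  set s : ℕ → ℕ := fun k => ∑ i ∈ Finset.range (k + 1), b.get i
  have s_strictMono : StrictMono s := strictMono_nat_of_lt_succ fun k => by
    simpa [s, Finset.sum_range_succ _ (k + 1)] using hb (k + 1)
  refine ⟨Set.range s, Set.infinite_range_of_injective s_strictMono.injective, ?_, ?_⟩
  · rintro _ ⟨k, rfl⟩
    exact FS.finsetSum b _ (Finset.nonempty_range_iff.2 k.succ_ne_zero)
  · rintro _ ⟨i, rfl⟩ _ ⟨k, rfl⟩ hlt
    have hik : i < k := s_strictMono.lt_iff_lt.1 hlt
    have sub_eq : s k - s i = ∑ j ∈ Finset.Ico (i + 1) (k + 1), b.get j := by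
      simp only [s]
      rw [← Finset.sum_range_add_sum_Ico _ (by omega : i + 1 ≤ k + 1), Nat.add_sub_cancel_left]
    rw [sub_eq]
    exact FS.finsetSum b _ (Finset.nonempty_Ico.2 (by omega))

/-- Both `x + y = z` and `−x + y = z` are Ramsey partition regular in `(x,y),z`:
for every finite colouring of the positive integers there are a colour class `C` and an
infinite `H ⊆ C` with all pairwise sums (resp. all pairwise differences) from `H` in `C`. -/
theorem stmt_14 :
    (∀ r : ℕ, ∀ col : ℕ → Fin r, ∃ j : Fin r, ∃ H : Set ℕ,
      H.Infinite ∧ (∀ h ∈ H, 0 < h ∧ col h = j) ∧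
      ∀ h₁ ∈ H, ∀ h₂ ∈ H, h₁ < h₂ → 0 < h₁ + h₂ ∧ col (h₁ + h₂) = j) ∧
    (∀ r : ℕ, ∀ col : ℕ → Fin r, ∃ j : Fin r, ∃ H : Set ℕ,
      H.Infinite ∧ (∀ h ∈ H, 0 < h ∧ col h = j) ∧
      ∀ h₁ ∈ H, ∀ h₂ ∈ H, h₁ < h₂ → 0 < h₂ - h₁ ∧ col (h₂ - h₁) = j) := by
  constructor
  · intro r col
    obtain ⟨j, b, hb, hC⟩ := exists_colour_pos_stream_FS_subset col
    obtain ⟨H, hH, hHb, hadd⟩ := exists_infinite_pairwise_add_mem_FS hb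
    exact ⟨j, H, hH, fun h hh => hC (hHb hh), fun h₁ h₁H h₂ h₂H hlt => hC (hadd h₁ h₁H h₂ h₂H hlt)⟩
  · intro r col
    obtain ⟨j, b, hb, hC⟩ := exists_colour_pos_stream_FS_subset col
    obtain ⟨H, hH, hHb, hsub⟩ := exists_infinite_pairwise_sub_mem_FS hb
    exact ⟨j, H, hH, fun h hh => hC (hHb hh), fun h₁ h₁H h₂ h₂H hlt => hC (hsub h₁ h₁H h₂ h₂H hlt)⟩
end

section
/- There exists a finite colouring of the positive integers with the following property: for every colour class C and every infinite set H ⊆ C there exist h₁ < h₂ in H such that no z ∈ C satisfies h₁ + h₂ = 2·z or h₁ + z = 2·h₂ or h₂ + z = 2·h₁. In other words, the relation 'x, y, z form, in some order, a 3-term arithmetic progression' is not Ramsey partition regular in (x,y),z; there is no Ramsey version of van der Waerden's theorem even for progressions of length 3. -/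
/-- There is no Ramsey version of van der Waerden's theorem, even for 3-term arithmetic
progressions: some finite colouring of the positive integers has the property that for
every colour class `C` and every infinite `H ⊆ C` there are `h₁ < h₂` in `H` such that
no `z ∈ C` makes `{h₁, h₂, z}` into a 3-term arithmetic progression in some order. -/
theorem stmt_15 :
    ∃ r : ℕ, ∃ col : ℕ → Fin r, ∀ j : Fin r, ∀ H : Set ℕ,
      (∀ h ∈ H, 0 < h ∧ col h = j) → H.Infinite →
      ∃ h₁ ∈ H, ∃ h₂ ∈ H, h₁ < h₂ ∧
        ¬ ∃ z : ℕ, (0 < z ∧ col z = j) ∧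
          (h₁ + h₂ = 2 * z ∨ h₁ + z = 2 * h₂ ∨ h₂ + z = 2 * h₁) := by
  refine ⟨6, fun n => ⟨Nat.log 2 (n ^ 3) % 6, Nat.mod_lt _ (by norm_num)⟩, ?_⟩
  intro j H hH hInf
  obtain ⟨h₁, hh₁⟩ := hInf.nonempty
  obtain ⟨h₂, hh₂, hlt⟩ := hInf.exists_gt (3 * h₁)
  obtain ⟨h₁pos, h₁col⟩ := hH h₁ hh₁
  obtain ⟨h₂pos, h₂col⟩ := hH h₂ hh₂
  refine ⟨h₁, hh₁, h₂, hh₂, by omega, ?_⟩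
  rintro ⟨z, ⟨zpos, zcol⟩, hcase⟩
  have hmod : Nat.log 2 (z ^ 3) % 6 = Nat.log 2 (h₂ ^ 3) % 6 := by
    have h := zcol.trans h₂col.symm
    simpa [Fin.ext_iff] using h
  set A := Nat.log 2 (z ^ 3) with hA
  set B := Nat.log 2 (h₂ ^ 3) with hB
  have hz3 : z ^ 3 ≠ 0 := by positivity
  have hh3 : h₂ ^ 3 ≠ 0 := by positivity
  have hB1 : 2 ^ B ≤ h₂ ^ 3 := Nat.pow_log_le_self 2 hh3
  have hB2 : h₂ ^ 3 < 2 ^ (B + 1) := Nat.lt_pow_succ_log_self (by norm_num) _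
  have hA1 : 2 ^ A ≤ z ^ 3 := Nat.pow_log_le_self 2 hz3
  have hA2 : z ^ 3 < 2 ^ (A + 1) := Nat.lt_pow_succ_log_self (by norm_num) _
  have eB : (2 : ℕ) ^ (B + 1) = 2 * 2 ^ B := by ring
  have eA : (2 : ℕ) ^ (A + 1) = 2 * 2 ^ A := by ring
  have powlt : ∀ m n : ℕ, (2 : ℕ) ^ m < 2 ^ n → m < n := by
    intro m n h
    exact (Nat.pow_lt_pow_iff_right (by norm_num)).mp h
  rcases hcase with h | h | h
  · -- z is the midpoint: 2z = h₁ + h₂, so h₂/2 < z ≤ 2h₂/3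
    have h6z : 3 * z ≤ 2 * h₂ := by omega
    have h2z : h₂ < 2 * z := by omega
    have k1 : 27 * z ^ 3 ≤ 8 * h₂ ^ 3 := by
      calc 27 * z ^ 3 = (3 * z) ^ 3 := by ring
        _ ≤ (2 * h₂) ^ 3 := Nat.pow_le_pow_left h6z 3
        _ = 8 * h₂ ^ 3 := by ring
    have k2 : h₂ ^ 3 < 8 * z ^ 3 := by
      calc h₂ ^ 3 < (2 * z) ^ 3 := Nat.pow_lt_pow_left h2z (by norm_num)
        _ = 8 * z ^ 3 := by ring
    have hAB : A < B := by
      have : (2 : ℕ) ^ A < 2 ^ B := by nlinarith [hA1, k1, hB2, eB]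
      exact powlt _ _ this
    have hBA : B < A + 4 := by
      have : (2 : ℕ) ^ B < 2 ^ (A + 4) := by
        have e : (2 : ℕ) ^ (A + 4) = 16 * 2 ^ A := by ring
        nlinarith [hB1, k2, hA2, eA]
      exact powlt _ _ this
    omega
  · -- z = 2h₂ - h₁, so 5h₂/3 ≤ z < 2h₂
    have h5 : 5 * h₂ < 3 * z := by omega
    have h2 : z < 2 * h₂ := by omega
    have k1 : 125 * h₂ ^ 3 ≤ 27 * z ^ 3 := by
      calc 125 * h₂ ^ 3 = (5 * h₂) ^ 3 := by ring
        _ ≤ (3 * z) ^ 3 := Nat.pow_le_pow_left (le_of_lt h5) 3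
        _ = 27 * z ^ 3 := by ring
    have k2 : z ^ 3 < 8 * h₂ ^ 3 := by
      calc z ^ 3 < (2 * h₂) ^ 3 := Nat.pow_lt_pow_left h2 (by norm_num)
        _ = 8 * h₂ ^ 3 := by ring
    have hBA : B + 2 ≤ A := by
      have : (2 : ℕ) ^ (B + 2) < 2 ^ (A + 1) := by
        have e : (2 : ℕ) ^ (B + 2) = 4 * 2 ^ B := by ring
        nlinarith [hB1, k1, hA2, eA]
      have := powlt _ _ this
      omega
    have hAB : A < B + 4 := by
      have : (2 : ℕ) ^ A < 2 ^ (B + 4) := by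
        have e : (2 : ℕ) ^ (B + 4) = 16 * 2 ^ B := by ring
        nlinarith [hA1, k2, hB2, eB]
      exact powlt _ _ this
    omega
  · omega
end

section
/- Let a, b, c, k₁, k₂, k₃ be positive integers. The following are equivalent: (1) for every finite colouring of the positive integers there exist an infinite set H of positive integers and a colour class C such that for all h₁, h₂ ∈ H with h₁ < h₂ there is z ∈ C with a·h₁^{k₁} + b·h₂^{k₂} = c·z^{k₃} (i.e. the equation a·x^{k₁} + b·y^{k₂} = c·z^{k₃} is Ramsey partition regular in (x,y)∣z); (2) k₃ = 1. -/
/-!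
If `k₃ = 1`, colour each pair `h₁ < h₂` of positive multiples of `c` by the colour of
`(a h₁^k₁ + b h₂^k₂) / c`; Ramsey's theorem for pairs gives an infinite set on which this colour
is constant.

If `k₃ ≥ 2`, even the one-colour case fails. Fix `h < h'` in `H`. For every larger `h₂ ∈ H` the
values `c z^k₃` and `c z'^k₃` attached to `(h, h₂)` and `(h', h₂)` differ by the fixed amount
`D = a h'^k₁ - a h^k₁`, while `z'^k₃ - z^k₃ ≥ z'` whenever `z < z'`. Hence `z' ≤ D`, so
`h₂ ≤ c D^k₃` and `H` is bounded.
-/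

lemma Set.Infinite.exists_infinite_fiber {α κ : Type*} [Finite κ] (f : α → κ) {S : Set α}
    (hS : S.Infinite) : ∃ j, {x ∈ S | f x = j}.Infinite := by
  by_contra! h
  exact hS ((Set.finite_iUnion h).subset fun x hx => Set.mem_iUnion.2 ⟨f x, hx, rfl⟩)

section Ramsey

variable {α κ : Type*} [LinearOrder α] [LocallyFiniteOrderBot α] [Finite κ]

lemma Set.Infinite.exists_infinite_monochromatic_star (f : α → α → κ) {A : Set α}
    (hA : A.Infinite) : ∃ x ∈ A, ∃ j, ∃ B ⊆ A, B.Infinite ∧ ∀ y ∈ B, x < y ∧ f x y = j := by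
  obtain ⟨x, hx⟩ := hA.nonempty
  obtain ⟨j, hj⟩ := (hA.sdiff (Set.finite_Iic x)).exists_infinite_fiber (f x)
  refine ⟨x, hx, j, _, fun y hy => hy.1.1, hj, fun y hy => ⟨?_, hy.2⟩⟩
  simpa using hy.1.2

theorem Set.Infinite.exists_infinite_monochromatic_pairs (f : α → α → κ) {S : Set α}
    (hS : S.Infinite) :
    ∃ T ⊆ S, T.Infinite ∧ ∃ j, ∀ x ∈ T, ∀ y ∈ T, x < y → f x y = j := by
  choose x hx j B hBA hB hxB using
    fun A : {A : Set α // A.Infinite} => A.2.exists_infinite_monochromatic_star f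
  let chain : ℕ → {A : Set α // A.Infinite} := fun n => Nat.rec ⟨S, hS⟩ (fun _ A => ⟨B A, hB A⟩) n
  have chain_anti : Antitone fun n => (chain n).1 := antitone_nat_of_succ_le fun n => hBA _
  let u n := x (chain n)
  have hu : ∀ m n, m < n → u m < u n ∧ f (u m) (u n) = j (chain m) := fun m n hmn =>
    hxB _ _ (chain_anti (Nat.succ_le_of_lt hmn) (hx (chain n)))
  have u_strictMono : StrictMono u := fun m n hmn => (hu m n hmn).1
  obtain ⟨J, hJ⟩ := Set.infinite_univ.exists_infinite_fiber fun n => j (chain n)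
  refine ⟨u '' {n | n ∈ Set.univ ∧ j (chain n) = J}, ?_, hJ.image u_strictMono.injective.injOn,
    J, ?_⟩
  · rintro _ ⟨n, -, rfl⟩
    exact chain_anti (Nat.zero_le n) (hx (chain n))
  · rintro _ ⟨m, ⟨-, hm⟩, rfl⟩ _ ⟨n, -, rfl⟩ hlt
    rw [(hu m n (u_strictMono.lt_iff_lt.mp hlt)).2, hm]

end Ramsey

def RamseyPartitionRegular (φ : ℕ → ℕ → ℕ → Prop) : Prop :=
  ∀ r : ℕ, ∀ col : ℕ → Fin r,
    ∃ H : Set ℕ, H.Infinite ∧ (∀ h ∈ H, 0 < h) ∧ ∃ j : Fin r,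
      ∀ h₁ ∈ H, ∀ h₂ ∈ H, h₁ < h₂ → ∃ z : ℕ, 0 < z ∧ col z = j ∧ φ h₁ h₂ z

namespace RamseyPartitionRegular

variable {φ : ℕ → ℕ → ℕ → Prop}

lemma of_forall_lt {S : Set ℕ} (hS : S.Infinite) (hS_pos : ∀ h ∈ S, 0 < h) (g : ℕ → ℕ → ℕ)
    (hg : ∀ h₁ ∈ S, ∀ h₂ ∈ S, h₁ < h₂ → 0 < g h₁ h₂ ∧ φ h₁ h₂ (g h₁ h₂)) :
    RamseyPartitionRegular φ := by
  intro r col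
  obtain ⟨T, hTS, hT, j, hTj⟩ := hS.exists_infinite_monochromatic_pairs fun h₁ h₂ => col (g h₁ h₂)
  refine ⟨T, hT, fun h hh => hS_pos h (hTS hh), j, fun h₁ hh₁ h₂ hh₂ hlt => ?_⟩
  obtain ⟨hpos, hφ⟩ := hg h₁ (hTS hh₁) h₂ (hTS hh₂) hlt
  exact ⟨g h₁ h₂, hpos, hTj h₁ hh₁ h₂ hh₂ hlt, hφ⟩

lemma exists_infinite (hφ : RamseyPartitionRegular φ) :
    ∃ H : Set ℕ, H.Infinite ∧ ∀ h₁ ∈ H, ∀ h₂ ∈ H, h₁ < h₂ → ∃ z, φ h₁ h₂ z := by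
  obtain ⟨H, hH, -, _, hHφ⟩ := hφ 1 fun _ => 0
  exact ⟨H, hH, fun h₁ hh₁ h₂ hh₂ hlt => (hHφ h₁ hh₁ h₂ hh₂ hlt).imp fun _ hz => hz.2.2⟩

end RamseyPartitionRegular

lemma pow_add_le_pow_of_lt {k z z' : ℕ} (hk : 2 ≤ k) (hzz' : z < z') : z ^ k + z' ≤ z' ^ k := by
  obtain ⟨m, rfl⟩ : ∃ m, k = m + 2 := ⟨k - 2, by omega⟩
  obtain ⟨t, rfl⟩ : ∃ t, z' = t + 1 := ⟨z' - 1, by omega⟩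
  have hz : z ^ (m + 1) ≤ (t + 1) ^ (m + 1) := Nat.pow_le_pow_left (by omega) _
  have ht : t + 1 ≤ (t + 1) ^ (m + 1) := Nat.le_self_pow (by omega) _
  calc z ^ (m + 2) + (t + 1) = z ^ (m + 1) * z + (t + 1) := by ring
    _ ≤ (t + 1) ^ (m + 1) * t + (t + 1) ^ (m + 1) := by gcongr; omega
    _ = (t + 1) ^ (m + 2) := by ring

lemma mul_pow_le_of_mul_pow_add_eq {c k z z' D : ℕ} (hk : 2 ≤ k) (hD : 0 < D)
    (h : c * z ^ k + D = c * z' ^ k) : c * z' ^ k ≤ c * D ^ k := by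
  rcases Nat.eq_zero_or_pos c with rfl | hc
  · simp
  have hzz' : z < z' := by
    by_contra! hle
    have := Nat.mul_le_mul_left c (Nat.pow_le_pow_left hle k)
    omega
  have hgap : c * z ^ k + c * z' ≤ c * z' ^ k := by
    rw [← mul_add]; exact Nat.mul_le_mul_left c (pow_add_le_pow_of_lt hk hzz')
  have hz'D : z' ≤ D := by nlinarith
  exact Nat.mul_le_mul_left c (Nat.pow_le_pow_left hz'D k)

theorem not_ramseyPartitionRegular_of_two_le {a b c k₁ k₂ k₃ : ℕ} (ha : 0 < a) (hb : 0 < b)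
    (hk₁ : 0 < k₁) (hk₂ : 0 < k₂) (hk₃ : 2 ≤ k₃) :
    ¬ RamseyPartitionRegular fun x y z => a * x ^ k₁ + b * y ^ k₂ = c * z ^ k₃ := by
  intro hφ
  obtain ⟨H, hH, hHφ⟩ := hφ.exists_infinite
  obtain ⟨h, hh⟩ := hH.nonempty
  obtain ⟨h', hh', hhh'⟩ := hH.exists_gt h
  have hlt : a * h ^ k₁ < a * h' ^ k₁ :=
    Nat.mul_lt_mul_of_pos_left (Nat.pow_lt_pow_left hhh' hk₁.ne') ha
  obtain ⟨D, hD, hD_eq⟩ : ∃ D, 0 < D ∧ a * h' ^ k₁ = a * h ^ k₁ + D :=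
    ⟨_, Nat.sub_pos_of_lt hlt, (Nat.add_sub_cancel' hlt.le).symm⟩
  obtain ⟨h₂, hh₂, hh'h₂, hh₂D⟩ : ∃ h₂ ∈ H, h' < h₂ ∧ c * D ^ k₃ < h₂ := by
    obtain ⟨h₂, hh₂, hlt⟩ := hH.exists_gt (max h' (c * D ^ k₃))
    exact ⟨h₂, hh₂, max_lt_iff.mp hlt⟩
  obtain ⟨z, hz⟩ := hHφ h hh h₂ hh₂ (hhh'.trans hh'h₂)
  obtain ⟨z', hz'⟩ := hHφ h' hh' h₂ hh₂ hh'h₂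
  have hzz' : c * z' ^ k₃ ≤ c * D ^ k₃ := mul_pow_le_of_mul_pow_add_eq (z := z) hk₃ hD (by omega)
  have hh₂_le : h₂ ≤ b * h₂ ^ k₂ := (Nat.le_self_pow hk₂.ne' h₂).trans (Nat.le_mul_of_pos_left _ hb)
  omega

theorem ramseyPartitionRegular_linear {a b c k₁ k₂ : ℕ} (ha : 0 < a) (hc : 0 < c)
    (hk₁ : 0 < k₁) (hk₂ : 0 < k₂) :
    RamseyPartitionRegular fun x y z => a * x ^ k₁ + b * y ^ k₂ = c * z := by
  have hS : {n | 0 < n ∧ c ∣ n}.Infinite :=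
    Set.infinite_of_injective_forall_mem (f := fun n => c * (n + 1))
      (fun m n hmn => by simpa using Nat.eq_of_mul_eq_mul_left hc hmn)
      (fun n => ⟨by positivity, dvd_mul_right c _⟩)
  refine .of_forall_lt hS (fun _ hh => hh.1) (fun x y => (a * x ^ k₁ + b * y ^ k₂) / c) ?_
  rintro x ⟨hx, hcx⟩ y ⟨-, hcy⟩ -
  have hdvd : c ∣ a * x ^ k₁ + b * y ^ k₂ :=
    dvd_add (dvd_mul_of_dvd_right (dvd_pow hcx hk₁.ne') a)
      (dvd_mul_of_dvd_right (dvd_pow hcy hk₂.ne') b)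
  have hpos : 0 < a * x ^ k₁ + b * y ^ k₂ := Nat.add_pos_left (by positivity) _
  exact ⟨Nat.div_pos (Nat.le_of_dvd hpos hdvd) hc, (Nat.mul_div_cancel' hdvd).symm⟩

/-- The equation `a·x^{k₁} + b·y^{k₂} = c·z^{k₃}` is Ramsey partition regular in
`(x,y) ∣ z` over the positive integers if and only if `k₃ = 1`. -/
theorem stmt_16 (a b c k₁ k₂ k₃ : ℕ)
    (ha : 0 < a) (hb : 0 < b) (hc : 0 < c)
    (hk₁ : 0 < k₁) (hk₂ : 0 < k₂) (hk₃ : 0 < k₃) :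
    (∀ r : ℕ, ∀ col : ℕ → Fin r,
      ∃ H : Set ℕ, H.Infinite ∧ (∀ h ∈ H, 0 < h) ∧ ∃ j : Fin r,
        ∀ h₁ ∈ H, ∀ h₂ ∈ H, h₁ < h₂ →
          ∃ z : ℕ, 0 < z ∧ col z = j ∧ a * h₁ ^ k₁ + b * h₂ ^ k₂ = c * z ^ k₃) ↔
    k₃ = 1 := by
  change RamseyPartitionRegular (fun x y z => a * x ^ k₁ + b * y ^ k₂ = c * z ^ k₃) ↔ k₃ = 1
  constructor
  · intro hφ
    by_contra hk₃_ne
    exact not_ramseyPartitionRegular_of_two_le ha hb hk₁ hk₂ (by omega) hφ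
  · rintro rfl
    simpa only [pow_one] using ramseyPartitionRegular_linear (b := b) ha hc hk₁ hk₂
end

section
/- Let f be a strictly increasing function from the positive integers to the positive integers such that the map n ↦ f(n+1) − f(n) is finite-to-one, and let g be any function from the positive integers to the positive integers. Then the equation g(x) + f(y) = f(z) is not Ramsey partition regular in (x,y)∣z: there exists a finite colouring of the positive integers such that there are no infinite set H of positive integers and colour class C with the property that for all h₁, h₂ ∈ H with h₁ < h₂ there is z ∈ C with g(h₁) + f(h₂) = f(z). -/
/-- If `f` is strictly increasing on the positive integers with `n ↦ f(n+1) − f(n)`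
finite-to-one, then for any `g` the equation `g(x) + f(y) = f(z)` is not Ramsey
partition regular in `(x,y) ∣ z` over the positive integers. -/
theorem stmt_17 (f g : ℕ → ℕ)
    (hfpos : ∀ n : ℕ, 0 < n → 0 < f n)
    (hgpos : ∀ n : ℕ, 0 < n → 0 < g n)
    (hmono : StrictMonoOn f {n : ℕ | 0 < n})
    (hdiff : ∀ m : ℕ, {n : ℕ | 0 < n ∧ f (n + 1) - f n = m}.Finite) :
    ∃ r : ℕ, ∃ col : ℕ → Fin r,
      ¬ ∃ H : Set ℕ, H.Infinite ∧ (∀ h ∈ H, 0 < h) ∧ ∃ j : Fin r,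
        ∀ h₁ ∈ H, ∀ h₂ ∈ H, h₁ < h₂ →
          ∃ z : ℕ, 0 < z ∧ col z = j ∧ g h₁ + f h₂ = f z := by
  refine ⟨1, fun _ => 0, ?_⟩
  rintro ⟨H, hInf, hpos, j, hall⟩
  obtain ⟨h₁, hh₁⟩ := hInf.nonempty
  set a := g h₁ with ha
  -- The set of elements of H above h₁ is infinite.
  have hSinf : (H \ Set.Iic h₁).Infinite := hInf.diff (Set.finite_Iic h₁)
  -- It is contained in a finite union of fibers of the difference map.
  have hTfin : (⋃ m ∈ Finset.range (a + 1),
      {n : ℕ | 0 < n ∧ f (n + 1) - f n = m}).Finite :=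
    Set.Finite.biUnion (Finset.range (a + 1)).finite_toSet (fun m _ => hdiff m)
  apply hSinf
  refine hTfin.subset ?_
  rintro h₂ ⟨hH, hgt⟩
  simp only [Set.mem_Iic, not_le] at hgt
  obtain ⟨z, hz, -, heq⟩ := hall h₁ hh₁ h₂ hH hgt
  have hh₂pos : 0 < h₂ := hpos h₂ hH
  have hzgt : h₂ < z := by
    by_contra hle
    push_neg at hle
    have := hmono.monotoneOn hz hh₂pos hle
    have hga : 0 < a := hgpos h₁ (hpos h₁ hh₁)
    omega
  have hle : f (h₂ + 1) ≤ f z :=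
    hmono.monotoneOn (by simp : 0 < h₂ + 1) hz hzgt
  have hdle : f (h₂ + 1) - f h₂ ≤ a := by omega
  simp only [Set.mem_iUnion, Finset.mem_range, Set.mem_setOf_eq]
  exact ⟨f (h₂ + 1) - f h₂, by omega, hh₂pos, rfl⟩
end

section
/- Let w be a Ramsey witness on ℕ × ℕ. Then: (1) the image of w under the map (a, b) ↦ a·b is different from the image of w under the map (a, b) ↦ a^b; and (2) the image of w under the map (a, b) ↦ a^b is different from the image of w under the map (a, b) ↦ b^a (all as ultrafilters on ℕ). -/
/-!
Apply `lg³` (with `lg = Nat.log 2`). On a `w`-large set of pairs `a < b` with `b` huge compared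
to `a`, the numbers `lg³ (a * b)` and `lg³ (b ^ a)` equal `lg³ b` and `lg³ (a ^ b)` equals `lg² b`,
each up to an error `0` or `1` which the ultrafilter makes constant. Pushing `w` forward along
`b ↦ lg² b` to an ultrafilter `u`, either equality of images gives `u.map (lg · + c) = u.map (· + c')`
with `c ≤ 1`, so `u.map (· + c')` is invariant under `y ↦ lg (y - c') + c`, a map that is strictly
decreasing almost everywhere. No ultrafilter on `ℕ` is: the parity of the number of descent steps
would flip under the map.
-/

local notation "lg" => Nat.log 2

theorem log_two_le_add_one_of_le_two_mul_add_one {x y : ℕ} (h : y ≤ 2 * x + 1) :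
    lg y ≤ lg x + 1 := by
  rcases Nat.eq_zero_or_pos y with rfl | hy
  · simp
  refine Nat.lt_succ_iff.1 (Nat.log_lt_of_lt_pow hy.ne' ?_)
  have := Nat.lt_pow_succ_log_self (b := 2) (by norm_num) x
  rw [pow_succ]
  omega

theorem log_two_add_one_lt {x : ℕ} (hx : 3 ≤ x) : lg x + 1 < x := by
  rw [Nat.log_of_one_lt_of_le (by norm_num) (by omega)]
  have := Nat.log_lt_self 2 (by omega : x / 2 ≠ 0)
  omega

theorem log_two_mul_le (x y : ℕ) : lg (x * y) ≤ lg x + lg y + 1 := by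
  rcases Nat.eq_zero_or_pos x with rfl | hx
  · simp
  rcases Nat.eq_zero_or_pos y with rfl | hy
  · simp
  refine Nat.lt_succ_iff.1 (Nat.log_lt_of_lt_pow (by positivity) ?_)
  calc x * y < 2 ^ (lg x + 1) * 2 ^ (lg y + 1) :=
        Nat.mul_lt_mul_of_lt_of_lt (Nat.lt_pow_succ_log_self (by norm_num) x)
          (Nat.lt_pow_succ_log_self (by norm_num) y)
    _ = 2 ^ (lg x + lg y + 1).succ := by rw [← pow_add]; congr 1; omega

theorem mul_log_two_le_log_two_pow (m n : ℕ) : n * lg m ≤ lg (m ^ n) := by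
  rcases Nat.eq_zero_or_pos m with rfl | hm
  · simp
  refine Nat.le_log_of_pow_le (by norm_num) ?_
  rw [mul_comm, pow_mul]
  exact Nat.pow_le_pow_left (Nat.pow_log_le_self 2 hm.ne') n

theorem log_two_pow_le {m n : ℕ} (hm : m ≠ 0) : lg (m ^ n) ≤ n * lg m + n := by
  rcases Nat.eq_zero_or_pos n with rfl | hn
  · simp
  have : m ^ n < 2 ^ (n * (lg m + 1)) := by
    rw [mul_comm, pow_mul]
    exact Nat.pow_lt_pow_left (Nat.lt_pow_succ_log_self (by norm_num) m) hn.ne'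
  have := Nat.log_lt_of_lt_pow (pow_ne_zero n hm) this
  rw [mul_add_one] at this
  omega

/-- Unlike `y = x + O(1)`, this relation is stable under `lg` (`WithinTwice.log_two`), so a single
`±1` ambiguity survives any number of logarithms. -/
def WithinTwice (x y : ℕ) : Prop := x ≤ y ∧ y ≤ 2 * x + 1

namespace WithinTwice

theorem log_two_le {x y : ℕ} (h : WithinTwice x y) : lg y ≤ lg x + 1 :=
  log_two_le_add_one_of_le_two_mul_add_one h.2

theorem log_two {x y : ℕ} (h : WithinTwice x y) : WithinTwice (lg x) (lg y) :=
  ⟨Nat.log_mono_right h.1, by have := h.log_two_le; omega⟩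

theorem log_two_eq_or {x y : ℕ} (h : WithinTwice x y) : lg y = lg x ∨ lg y = lg x + 1 := by
  have := Nat.log_mono_right (b := 2) h.1
  have := h.log_two_le
  omega

end WithinTwice

theorem withinTwice_log_two_mul {a b : ℕ} (ha : 1 ≤ a) (hab : a ≤ b) :
    WithinTwice (lg b) (lg (a * b)) :=
  ⟨Nat.log_mono_right (Nat.le_mul_of_pos_left b ha),
    by have := log_two_mul_le a b; have := Nat.log_mono_right (b := 2) hab; omega⟩

theorem withinTwice_log_two_pow {m n : ℕ} (hm : 2 ≤ m) :
    WithinTwice (n * lg m) (lg (m ^ n)) := by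
  have : 1 ≤ lg m := Nat.le_log_of_pow_le (by norm_num) (by omega)
  refine ⟨mul_log_two_le_log_two_pow m n, ?_⟩
  have := log_two_pow_le (n := n) (by omega : m ≠ 0)
  nlinarith

theorem log_two_log_two_pow_bounds {m n : ℕ} (hm : 2 ≤ m) (hn : 1 ≤ n) :
    max (lg n) (lg (lg m)) ≤ lg (lg (m ^ n)) ∧ lg (lg (m ^ n)) ≤ lg n + lg (lg m) + 2 := by
  have hlog := withinTwice_log_two_pow (n := n) hm
  have hlgm : 1 ≤ lg m := Nat.le_log_of_pow_le (by norm_num) (by omega)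
  have := log_two_mul_le n (lg m)
  have := Nat.log_mono_right (b := 2) (Nat.le_mul_of_pos_right n hlgm)
  have := Nat.log_mono_right (b := 2) (Nat.le_mul_of_pos_left (lg m) hn)
  have := hlog.log_two_le
  have := hlog.log_two.1
  omega

theorem withinTwice_log_two_log_two_pow_of_lt {m n : ℕ} (hm : 2 ≤ m) (hn : 1 ≤ n)
    (h : lg (lg m) < lg n) : WithinTwice (lg n) (lg (lg (m ^ n))) := by
  have := log_two_log_two_pow_bounds hm hn
  exact ⟨le_of_max_le_left this.1, by omega⟩

theorem withinTwice_log_two_log_two_pow_of_gt {m n : ℕ} (hm : 2 ≤ m) (hn : 1 ≤ n)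
    (h : lg n < lg (lg m)) : WithinTwice (lg (lg m)) (lg (lg (m ^ n))) := by
  have := log_two_log_two_pow_bounds hm hn
  exact ⟨le_of_max_le_right this.1, by omega⟩

def descentDepth (f : ℕ → ℕ) (x : ℕ) : ℕ :=
  if h : f x < x then descentDepth f (f x) + 1 else 0
termination_by x

theorem descentDepth_of_lt {f : ℕ → ℕ} {x : ℕ} (h : f x < x) :
    descentDepth f x = descentDepth f (f x) + 1 := by
  rw [descentDepth, dif_pos h]

namespace Ultrafilter

theorem map_ne_self_of_eventually_lt (u : Ultrafilter ℕ) {f : ℕ → ℕ}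
    (h : ∀ᶠ x in u, f x < x) : u.map f ≠ u := by
  intro hfix
  have hpre : ∀ {p : ℕ → Prop}, (∀ᶠ x in u, p x) → ∀ᶠ x in u, p (f x) := fun hp => by
    rw [← hfix] at hp; exact hp
  have parity : ∀ x, f x < x →
      (Even (descentDepth f (f x)) ↔ ¬Even (descentDepth f x)) := fun x hx => by
    rw [descentDepth_of_lt hx, Nat.even_add_one, not_not]
  rcases u.em fun x => Even (descentDepth f x) with he | he
  · obtain ⟨x, hx, hfx, hlt⟩ := (he.and ((hpre he).and h)).exists
    exact (parity x hlt).1 hfx hx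
  · obtain ⟨x, hx, hfx, hlt⟩ := (he.and ((hpre he).and h)).exists
    exact hfx ((parity x hlt).2 hx)

theorem map_ne_map_add_of_eventually_lt (u : Ultrafilter ℕ) {f : ℕ → ℕ} {c : ℕ}
    (h : ∀ᶠ x in u, f x < x + c) : u.map f ≠ u.map (· + c) := by
  intro heq
  refine map_ne_self_of_eventually_lt (u.map (· + c)) (f := fun y => f (y - c)) ?_ ?_
  · simpa using h
  · rw [map_map, ← heq]
    congr 1
    funext x
    simp

theorem map_congr_of_eventually {α β : Type*} {u : Ultrafilter α} {f g : α → β}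
    (h : ∀ᶠ x in u, f x = g x) : u.map f = u.map g :=
  coe_injective (by rw [coe_map, coe_map]; exact Filter.map_congr h)

theorem exists_eventually_eq_add {α : Type*} {u : Ultrafilter α} {F G : α → ℕ}
    (h : ∀ᶠ x in u, F x = G x ∨ F x = G x + 1) : ∃ c ≤ 1, ∀ᶠ x in u, F x = G x + c := by
  rcases eventually_or.1 h with h | h
  exacts [⟨0, zero_le_one, h⟩, ⟨1, le_rfl, h⟩]

theorem map_ne_map_of_triple_log_two_approx {α : Type*} {w : Ultrafilter α} {g f₁ f₂ : α → ℕ}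
    (hg : ∀ᶠ p in w, 3 ≤ g p)
    (h₁ : ∀ᶠ p in w, lg (lg (lg (f₁ p))) = lg (g p) ∨ lg (lg (lg (f₁ p))) = lg (g p) + 1)
    (h₂ : ∀ᶠ p in w, lg (lg (lg (f₂ p))) = g p ∨ lg (lg (lg (f₂ p))) = g p + 1) :
    w.map f₁ ≠ w.map f₂ := by
  intro heq
  obtain ⟨c₁, hc₁, h₁⟩ := exists_eventually_eq_add h₁
  obtain ⟨c₂, -, h₂⟩ := exists_eventually_eq_add h₂
  have e₁ : (w.map g).map (fun x => lg x + c₁) = (w.map f₁).map fun n => lg (lg (lg n)) := by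
    rw [map_map, map_map]; exact (map_congr_of_eventually h₁).symm
  have e₂ : (w.map g).map (· + c₂) = (w.map f₂).map fun n => lg (lg (lg n)) := by
    rw [map_map, map_map]; exact (map_congr_of_eventually h₂).symm
  refine map_ne_map_add_of_eventually_lt (w.map g) ?_ (by rw [e₁, e₂, heq])
  filter_upwards [hg] with p hp
  have := log_two_add_one_lt hp
  omega

end Ultrafilter

theorem IsRamseyWitness.eventually_of_forall_infinite {w : Ultrafilter (ℕ × ℕ)}
    (hw : IsRamseyWitness w) {P : ℕ × ℕ → Prop}
    (h : ∀ H : Set ℕ, H.Infinite → ∃ a ∈ H, ∃ b ∈ H, a < b ∧ P (a, b)) :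
    ∀ᶠ p in w, P p := by
  by_contra hP
  obtain ⟨H, hH, hsub⟩ := hw _ (Ultrafilter.compl_mem_iff_notMem.2 hP)
  obtain ⟨a, ha, b, hb, hab, hPab⟩ := h H hH
  exact hsub a ha b hb hab hPab

theorem IsRamseyWitness.eventually_fst_add_two_le_log_two_log_two_snd {w : Ultrafilter (ℕ × ℕ)}
    (hw : IsRamseyWitness w) :
    ∀ᶠ p : ℕ × ℕ in w, 2 ≤ p.1 ∧ p.1 ≤ p.2 ∧ p.1 + 2 ≤ lg (lg p.2) := by
  refine hw.eventually_of_forall_infinite fun H hH => ?_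
  obtain ⟨a, haH, ha⟩ := hH.exists_gt 1
  obtain ⟨b, hbH, hb⟩ := hH.exists_gt (2 ^ 2 ^ (a + 2))
  have hab : a < b := by
    have := Nat.lt_two_pow_self (n := a + 2)
    have := Nat.lt_two_pow_self (n := 2 ^ (a + 2))
    omega
  exact ⟨a, haH, b, hbH, hab, ha, hab.le,
    Nat.le_log_of_pow_le (by norm_num) (Nat.le_log_of_pow_le (by norm_num) hb.le)⟩

/-- No Ramsey witness identifies pairwise products with pairwise exponentials, nor
`a^b` with `b^a`. -/
theorem stmt_18 (w : Ultrafilter (ℕ × ℕ)) (hw : IsRamseyWitness w) :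
    ((w.map fun p => p.1 * p.2) ≠ (w.map fun p => p.1 ^ p.2)) ∧
    ((w.map fun p => p.1 ^ p.2) ≠ (w.map fun p => p.2 ^ p.1)) := by
  have hP := hw.eventually_fst_add_two_le_log_two_log_two_snd
  have hg : ∀ᶠ p : ℕ × ℕ in w, 3 ≤ lg (lg p.2) := hP.mono fun p hp => by omega
  have hmul : ∀ᶠ p : ℕ × ℕ in w, lg (lg (lg (p.1 * p.2))) = lg (lg (lg p.2)) ∨
      lg (lg (lg (p.1 * p.2))) = lg (lg (lg p.2)) + 1 :=
    hP.mono fun p ⟨ha, hab, _⟩ => (withinTwice_log_two_mul (by omega) hab).log_two.log_two_eq_or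
  have hpow : ∀ᶠ p : ℕ × ℕ in w, lg (lg (lg (p.1 ^ p.2))) = lg (lg p.2) ∨
      lg (lg (lg (p.1 ^ p.2))) = lg (lg p.2) + 1 :=
    hP.mono fun p ⟨ha, _, hb⟩ => by
      have := Nat.log_le_self 2 p.1
      have := Nat.log_le_self 2 (lg p.1)
      have := Nat.log_le_self 2 (lg p.2)
      exact (withinTwice_log_two_log_two_pow_of_lt ha (by omega) (by omega)).log_two_eq_or
  have hpow' : ∀ᶠ p : ℕ × ℕ in w, lg (lg (lg (p.2 ^ p.1))) = lg (lg (lg p.2)) ∨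
      lg (lg (lg (p.2 ^ p.1))) = lg (lg (lg p.2)) + 1 :=
    hP.mono fun p ⟨ha, hab, hb⟩ => by
      have := Nat.log_le_self 2 p.1
      exact (withinTwice_log_two_log_two_pow_of_gt (by omega) (by omega) (by omega)).log_two_eq_or
  exact ⟨Ultrafilter.map_ne_map_of_triple_log_two_approx hg hmul hpow,
    fun h => Ultrafilter.map_ne_map_of_triple_log_two_approx hg hpow' hpow h.symm⟩
end
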